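/- arXiv:1212.4965 — 9 statements merged into one kernel-verified Lean document; each statement's English description precedes it below -/
import Mathlib

section
/- Let 𝓗 be a complex separable Hilbert space and let U and U₀ be unitary operators on 𝓗 such that V := U − U₀ is trace class. Then there exist a nonnegative self-adjoint Hilbert–Schmidt operator C on 𝓗 and a bounded operator G on 𝓗 with ‖G‖ ≤ 2 such that V = C ∘ G ∘ C. -/
open ContinuousLinearMap

variable {𝓗 : Type*} [NormedAddCommGroup 𝓗] [InnerProductSpace ℂ 𝓗] [CompleteSpace 𝓗]

/-- An operator `T` on a complex Hilbert space is trace class iff the sums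
`∑ᵢ |⟨fᵢ, T eᵢ⟩|` over finite orthonormal families `(eᵢ)`, `(fᵢ)` are uniformly bounded. -/
def IsTraceClass (T : 𝓗 →L[ℂ] 𝓗) : Prop :=
  ∃ M : ℝ, ∀ (n : ℕ) (e f : Fin n → 𝓗), Orthonormal ℂ e → Orthonormal ℂ f →
    ∑ i, ‖(inner ℂ (f i) (T (e i)) : ℂ)‖ ≤ M

/-- The trace norm `‖T‖₁ = sup { ∑ᵢ |⟨fᵢ, T eᵢ⟩| }`, the supremum being taken over all
finite orthonormal families `(eᵢ)`, `(fᵢ)` in the Hilbert space. -/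
noncomputable def traceNorm (T : 𝓗 →L[ℂ] 𝓗) : ℝ :=
  sSup { x : ℝ | ∃ (n : ℕ) (e f : Fin n → 𝓗), Orthonormal ℂ e ∧ Orthonormal ℂ f ∧
    x = ∑ i, ‖(inner ℂ (f i) (T (e i)) : ℂ)‖ }

/-- An operator `T` is Hilbert–Schmidt iff the sums `∑ᵢ ‖T eᵢ‖²` over finite
orthonormal families `(eᵢ)` are uniformly bounded. -/
def IsHilbertSchmidt (T : 𝓗 →L[ℂ] 𝓗) : Prop :=
  ∃ M : ℝ, ∀ (n : ℕ) (e : Fin n → 𝓗), Orthonormal ℂ e → ∑ i, ‖T (e i)‖ ^ 2 ≤ M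

/-- A fixed Hilbert basis of `𝓗`. -/
noncomputable def aHilbertBasis (𝓗 : Type*) [NormedAddCommGroup 𝓗] [InnerProductSpace ℂ 𝓗]
    [CompleteSpace 𝓗] : HilbertBasis (exists_hilbertBasis ℂ 𝓗).choose ℂ 𝓗 :=
  (exists_hilbertBasis ℂ 𝓗).choose_spec.choose

/-- The trace of an operator, computed in a fixed Hilbert basis.  For a trace class
operator this is independent of the chosen basis and equals the canonical trace. -/
noncomputable def opTrace (T : 𝓗 →L[ℂ] 𝓗) : ℂ :=
  ∑' i, (inner ℂ (aHilbertBasis 𝓗 i) (T (aHilbertBasis 𝓗 i)) : ℂ)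

/-- The Cayley transform `(i - H)(i + H)⁻¹` of a bounded self-adjoint operator `H`
(for self-adjoint `H` the operator `i + H` is invertible in `B(𝓗)`, so `Ring.inverse`
produces its genuine inverse). -/
noncomputable def cayley (H : 𝓗 →L[ℂ] 𝓗) : 𝓗 →L[ℂ] 𝓗 :=
  (Complex.I • (1 : 𝓗 →L[ℂ] 𝓗) - H) * Ring.inverse (Complex.I • (1 : 𝓗 →L[ℂ] 𝓗) + H)

/-!
Write `V = U - U₀`. Douglas' lemma (a bound `‖A x‖ ≤ N ‖B x‖` factors `A = D B` with `‖D‖ ≤ N`)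
gives contractions with `V = W |V|` and `|V| = W' V`. With `R = |V|^{1/2}` one has
`⟪V x, y⟫ = ⟪R x, R W* y⟫`, so `C = (R* R + (R W*)* (R W*))^{1/2}` satisfies
`|⟪V x, y⟫| ≤ ‖C x‖ ‖C y‖`; two more applications of Douglas' lemma turn this form bound into
`V = C G C` with `‖G‖ ≤ 1`.

For the Hilbert–Schmidt bound, `‖R u‖² ≤ |⟪W'* u, V u⟫|`, so `∑ ‖C eᵢ‖²` is controlled by sums
`∑ |⟪X eᵢ, V Y eᵢ⟫|` with contractions `X`, `Y`. Writing a contraction as a combination of four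
unitaries with coefficients of modulus at most `1/2` reduces these to the sums over pairs of
orthonormal families that define the trace class.
-/

section Douglas

variable {𝕜 E F H : Type*} [RCLike 𝕜]
  [NormedAddCommGroup E] [NormedSpace 𝕜 E] [NormedAddCommGroup F] [NormedSpace 𝕜 F] [CompleteSpace F]
  [NormedAddCommGroup H] [InnerProductSpace 𝕜 H]

theorem denseRange_codRestrict_topologicalClosure (B : E →L[𝕜] H) :
    DenseRange ((B : E →ₗ[𝕜] H).codRestrict (B : E →ₗ[𝕜] H).range.topologicalClosure
      fun x => (B : E →ₗ[𝕜] H).range.le_topologicalClosure ⟨x, rfl⟩) := by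
  refine Subtype.dense_iff.mpr ?_
  rw [← Set.range_comp]
  exact (Submodule.topologicalClosure_coe _).subset

/-- Douglas' factorization lemma. -/
theorem exists_comp_eq_of_norm_apply_le [CompleteSpace H] (A : E →L[𝕜] F) (B : E →L[𝕜] H)
    {N : ℝ} (hN : 0 ≤ N) (h : ∀ x, ‖A x‖ ≤ N * ‖B x‖) :
    ∃ D : H →L[𝕜] F, ‖D‖ ≤ N ∧ D ∘L B = A ∧ (B : E →ₗ[𝕜] H).rangeᗮ ≤ (D : H →ₗ[𝕜] F).ker := by
  set K := (B : E →ₗ[𝕜] H).range.topologicalClosure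
  have hdense := denseRange_codRestrict_topologicalClosure B
  set D₀ := (A : E →ₗ[𝕜] F).extendOfNorm ((B : E →ₗ[𝕜] H).codRestrict K
      fun x => (B : E →ₗ[𝕜] H).range.le_topologicalClosure ⟨x, rfl⟩)
  refine ⟨D₀ ∘L K.orthogonalProjectionOnto, ?_, ?_, ?_⟩
  · calc ‖D₀ ∘L K.orthogonalProjectionOnto‖ ≤ ‖D₀‖ * ‖K.orthogonalProjectionOnto‖ :=
          opNorm_comp_le _ _
      _ ≤ N * 1 := mul_le_mul (LinearMap.opNorm_extendOfNorm_le hdense hN h)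
          K.orthogonalProjectionOnto_norm_le (norm_nonneg _) hN
      _ = N := mul_one N
  · ext x
    have hx : K.orthogonalProjectionOnto (B x) =
        ⟨B x, (B : E →ₗ[𝕜] H).range.le_topologicalClosure ⟨x, rfl⟩⟩ :=
      K.orthogonalProjectionOnto_mem_subspace_eq_self ⟨_, _⟩
    simp only [comp_apply, hx]
    exact LinearMap.extendOfNorm_eq hdense ⟨N, h⟩ x
  · intro y hy
    rw [← Submodule.orthogonal_closure] at hy
    rw [LinearMap.mem_ker, coe_coe, comp_apply,
      K.orthogonalProjectionOnto_apply_of_mem_orthogonal hy, map_zero]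

end Douglas

section FormBound

variable {𝕜 H : Type*} [RCLike 𝕜] [NormedAddCommGroup H] [InnerProductSpace 𝕜 H]

theorem norm_le_of_forall_mem_norm_inner_le {p : Submodule 𝕜 H} {w : H} {r : ℝ}
    (hw : w ∈ p.topologicalClosure) (hr : 0 ≤ r) (h : ∀ u ∈ p, ‖(inner 𝕜 w u : 𝕜)‖ ≤ r * ‖u‖) :
    ‖w‖ ≤ r := by
  have hclosed : IsClosed {u : H | ‖(inner 𝕜 w u : 𝕜)‖ ≤ r * ‖u‖} :=
    isClosed_le (by fun_prop) (by fun_prop)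
  have hww : ‖w‖ * ‖w‖ ≤ r * ‖w‖ := by
    rw [← inner_self_eq_norm_mul_norm (𝕜 := 𝕜)]
    refine (RCLike.re_le_norm _).trans (closure_minimal h hclosed ?_)
    rwa [← p.topologicalClosure_coe]
  rcases (norm_nonneg w).eq_or_lt with hw0 | hpos
  · rw [← hw0]; exact hr
  · exact le_of_mul_le_mul_right hww hpos

variable [CompleteSpace H]

theorem norm_apply_sq_eq_of_star_mul_self_eq_add {C S₁ S₂ : H →L[𝕜] H}
    (h : star C * C = star S₁ * S₁ + star S₂ * S₂) (x : H) :
    ‖C x‖ ^ 2 = ‖S₁ x‖ ^ 2 + ‖S₂ x‖ ^ 2 := by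
  simp only [apply_norm_sq_eq_inner_adjoint_left, ← star_eq_adjoint, ← mul_def, h, add_apply,
    inner_add_left, map_add]

theorem norm_apply_eq_of_star_mul_self_eq {A B : H →L[𝕜] H} (h : star A * A = star B * B)
    (x : H) : ‖A x‖ = ‖B x‖ := by
  rw [← sq_eq_sq₀ (norm_nonneg _) (norm_nonneg _)]
  simp only [apply_norm_sq_eq_inner_adjoint_left, ← star_eq_adjoint, ← mul_def, h]

theorem exists_eq_mul_mul_of_norm_inner_le {V C : H →L[𝕜] H} (hC : IsSelfAdjoint C)
    (h : ∀ x y, ‖(inner 𝕜 (V x) y : 𝕜)‖ ≤ ‖C x‖ * ‖C y‖) :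
    ∃ G : H →L[𝕜] H, ‖G‖ ≤ 1 ∧ V = C * G * C := by
  have hVC : ∀ x, ‖V x‖ ≤ ‖C‖ * ‖C x‖ := fun x =>
    norm_le_of_forall_mem_norm_inner_le (p := ⊤) (Submodule.le_topologicalClosure _ trivial)
      (by positivity) fun u _ => (h x u).trans <| by
        rw [mul_comm ‖C‖, mul_assoc]
        exact mul_le_mul_of_nonneg_left (C.le_opNorm u) (norm_nonneg _)
  obtain ⟨D, -, hDC, hker⟩ := exists_comp_eq_of_norm_apply_le V C (norm_nonneg C) hVC
  -- `D†` takes values in the closure of the range of `C`, where `h` controls it.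
  have hDadj : ∀ z, ‖adjoint D z‖ ≤ ‖C z‖ := by
    intro z
    have hmem : adjoint D z ∈ (C : H →ₗ[𝕜] H).range.topologicalClosure := by
      rw [← Submodule.orthogonal_orthogonal_eq_closure]
      refine Submodule.orthogonal_le hker ?_
      rw [orthogonal_ker]
      exact Submodule.le_topologicalClosure _ ⟨z, rfl⟩
    refine norm_le_of_forall_mem_norm_inner_le hmem (norm_nonneg _) ?_
    rintro _ ⟨x, rfl⟩
    rw [coe_coe, adjoint_inner_left, ← comp_apply, hDC, norm_inner_symm, mul_comm]
    exact h x z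
  obtain ⟨E, hE, hEC, -⟩ := exists_comp_eq_of_norm_apply_le (adjoint D) C zero_le_one
    (by simpa only [one_mul] using hDadj)
  refine ⟨adjoint E, by rwa [LinearIsometryEquiv.norm_map], ?_⟩
  have hD : D = C * adjoint E := by
    rw [← adjoint_adjoint D, ← hEC, adjoint_comp, hC.adjoint_eq]
    rfl
  rw [← hDC, hD]
  rfl

end FormBound

theorem sum_norm_le_of_forall_unitary {A F ι : Type*} [CStarAlgebra A] [NormedAddCommGroup F]
    [NormedSpace ℂ F] (s : Finset ι) (ℓ : ι → A →ₗ[ℂ] F) {M : ℝ}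
    (h : ∀ u ∈ unitary A, ∑ i ∈ s, ‖ℓ i u‖ ≤ M) {x : A} (hx : ‖x‖ ≤ 1) :
    ∑ i ∈ s, ‖ℓ i x‖ ≤ 2 * M := by
  obtain ⟨u, c, rfl, hc⟩ := CStarAlgebra.exists_sum_four_unitary x
  calc ∑ i ∈ s, ‖ℓ i (∑ j, c j • (u j : A))‖
      ≤ ∑ i ∈ s, ∑ j, ‖c j‖ * ‖ℓ i (u j)‖ := by
        gcongr with i
        simp only [map_sum, map_smul]
        exact (norm_sum_le _ _).trans_eq (by simp only [norm_smul])
    _ = ∑ j, ‖c j‖ * ∑ i ∈ s, ‖ℓ i (u j)‖ := by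
        rw [Finset.sum_comm]; simp only [Finset.mul_sum]
    _ ≤ ∑ _j : Fin 4, 2⁻¹ * M := by
        gcongr with j
        · exact (hc j).trans (by linarith)
        · exact h _ (u j).2
    _ = 2 * M := by
        simp only [Finset.sum_const, Finset.card_univ, Fintype.card_fin, nsmul_eq_mul]; ring

theorem Orthonormal.comp_unitary {ι : Type*} {e : ι → 𝓗} (he : Orthonormal ℂ e)
    {u : 𝓗 →L[ℂ] 𝓗} (hu : u ∈ unitary (𝓗 →L[ℂ] 𝓗)) : Orthonormal ℂ (u ∘ e) :=
  he.comp_linearIsometry (Unitary.linearIsometryEquiv ⟨u, hu⟩).toLinearIsometry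

theorem IsTraceClass.exists_sum_norm_inner_apply_le {V : 𝓗 →L[ℂ] 𝓗} (hV : IsTraceClass V) :
    ∃ M : ℝ, ∀ X Y : 𝓗 →L[ℂ] 𝓗, ‖X‖ ≤ 1 → ‖Y‖ ≤ 1 → ∀ (n : ℕ) (e : Fin n → 𝓗),
      Orthonormal ℂ e → ∑ i, ‖(inner ℂ (X (e i)) (V (Y (e i))) : ℂ)‖ ≤ M := by
  obtain ⟨M, hM⟩ := hV
  refine ⟨2 * (2 * M), fun X Y hX hY n e he => ?_⟩
  have hunitary : ∀ u ∈ unitary (𝓗 →L[ℂ] 𝓗),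
      ∑ i, ‖(inner ℂ (u (e i)) (V (Y (e i))) : ℂ)‖ ≤ 2 * M := fun u hu =>
    sum_norm_le_of_forall_unitary Finset.univ
      (fun i => ((innerSL ℂ (u (e i))).comp (V.comp (apply ℂ 𝓗 (e i))) : _ →ₗ[ℂ] ℂ))
      (fun w hw => hM n _ _ (he.comp_unitary hw) (he.comp_unitary hu)) hY
  simpa only [coe_coe, comp_apply, apply_apply, innerSL_apply_apply, norm_inner_symm (X _)]
    using sum_norm_le_of_forall_unitary Finset.univ
      (fun i => ((innerSL ℂ (V (Y (e i)))).comp (apply ℂ 𝓗 (e i)) : _ →ₗ[ℂ] ℂ))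
      (fun u hu => by simpa [norm_inner_symm] using hunitary u hu) hX

theorem star_sqrt_mul_sqrt {a : 𝓗 →L[ℂ] 𝓗} (ha : 0 ≤ a) : star (CFC.sqrt a) * CFC.sqrt a = a := by
  rw [(CFC.sqrt_nonneg a).isSelfAdjoint.star_eq, CFC.sqrt_mul_sqrt_self a ha]

theorem norm_abs_apply (T : 𝓗 →L[ℂ] 𝓗) (x : 𝓗) : ‖CFC.abs T x‖ = ‖T x‖ :=
  norm_apply_eq_of_star_mul_self_eq
    (by rw [(CFC.abs_nonneg T).isSelfAdjoint.star_eq, CFC.abs_mul_abs]) x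

theorem exists_eq_mul_abs (T : 𝓗 →L[ℂ] 𝓗) : ∃ W : 𝓗 →L[ℂ] 𝓗, ‖W‖ ≤ 1 ∧ T = W * CFC.abs T := by
  obtain ⟨W, hW, hWT, -⟩ := exists_comp_eq_of_norm_apply_le T (CFC.abs T) zero_le_one
    fun x => by rw [one_mul, norm_abs_apply]
  exact ⟨W, hW, hWT.symm⟩

theorem exists_abs_eq_mul (T : 𝓗 →L[ℂ] 𝓗) : ∃ W : 𝓗 →L[ℂ] 𝓗, ‖W‖ ≤ 1 ∧ CFC.abs T = W * T := by
  obtain ⟨W, hW, hWT, -⟩ := exists_comp_eq_of_norm_apply_le (CFC.abs T) T zero_le_one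
    fun x => by rw [one_mul, norm_abs_apply]
  exact ⟨W, hW, hWT.symm⟩

theorem norm_inner_le_norm_sqrt_abs_mul {T W : 𝓗 →L[ℂ] 𝓗} (hT : T = W * CFC.abs T) (x y : 𝓗) :
    ‖(inner ℂ (T x) y : ℂ)‖ ≤
      ‖CFC.sqrt (CFC.abs T) x‖ * ‖(CFC.sqrt (CFC.abs T) * adjoint W) y‖ := by
  set R := CFC.sqrt (CFC.abs T)
  have hR : IsSelfAdjoint R := (CFC.sqrt_nonneg _).isSelfAdjoint
  have : (inner ℂ (T x) y : ℂ) = inner ℂ (R x) ((R * adjoint W) y) := by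
    rw [hT, mul_apply_eq_comp, ← adjoint_inner_right, mul_apply_eq_comp, ← coe_coe R,
      ← hR.isSymmetric, coe_coe, ← mul_apply_eq_comp,
      CFC.sqrt_mul_sqrt_self (CFC.abs T) (CFC.abs_nonneg T)]
  rw [this]
  exact norm_inner_le_norm _ _

theorem norm_sqrt_abs_apply_sq_le {T W : 𝓗 →L[ℂ] 𝓗} (hT : CFC.abs T = W * T) (x : 𝓗) :
    ‖CFC.sqrt (CFC.abs T) x‖ ^ 2 ≤ ‖(inner ℂ (adjoint W x) (T x) : ℂ)‖ := by
  rw [apply_norm_sq_eq_inner_adjoint_left, ← star_eq_adjoint, ← mul_def,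
    star_sqrt_mul_sqrt (CFC.abs_nonneg T), hT, mul_apply_eq_comp, ← adjoint_inner_right,
    norm_inner_symm]
  exact RCLike.re_le_norm _

theorem norm_sqrt_apply_sq (S₁ S₂ : 𝓗 →L[ℂ] 𝓗) (x : 𝓗) :
    ‖CFC.sqrt (star S₁ * S₁ + star S₂ * S₂) x‖ ^ 2 = ‖S₁ x‖ ^ 2 + ‖S₂ x‖ ^ 2 :=
  norm_apply_sq_eq_of_star_mul_self_eq_add
    (star_sqrt_mul_sqrt (add_nonneg (star_mul_self_nonneg S₁) (star_mul_self_nonneg S₂))) x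

theorem norm_inner_le_norm_sqrt_add_mul {V S₁ S₂ : 𝓗 →L[ℂ] 𝓗}
    (h : ∀ x y, ‖(inner ℂ (V x) y : ℂ)‖ ≤ ‖S₁ x‖ * ‖S₂ y‖) (x y : 𝓗) :
    ‖(inner ℂ (V x) y : ℂ)‖ ≤ ‖CFC.sqrt (star S₁ * S₁ + star S₂ * S₂) x‖ *
      ‖CFC.sqrt (star S₁ * S₁ + star S₂ * S₂) y‖ := by
  have hS₁ : ‖S₁ x‖ ≤ ‖CFC.sqrt (star S₁ * S₁ + star S₂ * S₂) x‖ := by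
    rw [← pow_le_pow_iff_left₀ (norm_nonneg _) (norm_nonneg _) two_ne_zero, norm_sqrt_apply_sq]
    exact le_add_of_nonneg_right (sq_nonneg _)
  have hS₂ : ‖S₂ y‖ ≤ ‖CFC.sqrt (star S₁ * S₁ + star S₂ * S₂) y‖ := by
    rw [← pow_le_pow_iff_left₀ (norm_nonneg _) (norm_nonneg _) two_ne_zero, norm_sqrt_apply_sq]
    exact le_add_of_nonneg_left (sq_nonneg _)
  exact (h x y).trans (mul_le_mul hS₁ hS₂ (norm_nonneg _) (norm_nonneg _))

theorem IsTraceClass.exists_sum_norm_sqrt_abs_apply_sq_le {V : 𝓗 →L[ℂ] 𝓗} (hV : IsTraceClass V) :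
    ∃ M : ℝ, ∀ Y : 𝓗 →L[ℂ] 𝓗, ‖Y‖ ≤ 1 → ∀ (n : ℕ) (e : Fin n → 𝓗), Orthonormal ℂ e →
      ∑ i, ‖CFC.sqrt (CFC.abs V) (Y (e i))‖ ^ 2 ≤ M := by
  obtain ⟨M, hM⟩ := hV.exists_sum_norm_inner_apply_le
  obtain ⟨W, hW, hVW⟩ := exists_abs_eq_mul V
  refine ⟨M, fun Y hY n e he => ?_⟩
  have hWY : ‖adjoint W * Y‖ ≤ 1 :=
    (norm_mul_le _ _).trans (mul_le_one₀ (by rwa [LinearIsometryEquiv.norm_map]) (norm_nonneg _) hY)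
  calc ∑ i, ‖CFC.sqrt (CFC.abs V) (Y (e i))‖ ^ 2
      ≤ ∑ i, ‖(inner ℂ ((adjoint W * Y) (e i)) (V (Y (e i))) : ℂ)‖ :=
        Finset.sum_le_sum fun i _ => norm_sqrt_abs_apply_sq_le hVW _
    _ ≤ M := hM _ Y hWY hY n e he

theorem traceClass_difference_factorization_general
    (U U₀ : 𝓗 →L[ℂ] 𝓗)
    (hV : IsTraceClass (U - U₀)) :
    ∃ C G : 𝓗 →L[ℂ] 𝓗, C.IsPositive ∧ IsHilbertSchmidt C ∧ ‖G‖ ≤ 2 ∧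
      U - U₀ = C * G * C := by
  obtain ⟨M, hM⟩ := hV.exists_sum_norm_sqrt_abs_apply_sq_le
  obtain ⟨W, hW, hVW⟩ := exists_eq_mul_abs (U - U₀)
  obtain ⟨G, hG, hVG⟩ := exists_eq_mul_mul_of_norm_inner_le (CFC.sqrt_nonneg _).isSelfAdjoint
    (norm_inner_le_norm_sqrt_add_mul (norm_inner_le_norm_sqrt_abs_mul hVW))
  refine ⟨_, G, (nonneg_iff_isPositive _).1 (CFC.sqrt_nonneg _), ⟨M + M, fun n e he => ?_⟩,
    hG.trans one_le_two, hVG⟩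
  have hW' : ‖adjoint W‖ ≤ 1 := by rwa [LinearIsometryEquiv.norm_map]
  simp only [norm_sqrt_apply_sq, Finset.sum_add_distrib, mul_apply_eq_comp]
  exact add_le_add (hM 1 norm_id_le n e he) (hM _ hW' n e he)

/-- Lemma II.6.  Let `𝓗` be a complex separable Hilbert space and `U`, `U₀`
unitary operators on `𝓗` such that `V := U - U₀` is trace class.  Then there exist a
nonnegative self-adjoint Hilbert–Schmidt operator `C` and a bounded operator `G` with
`‖G‖ ≤ 2` such that `V = C G C`. -/
theorem traceClass_difference_factorization
    [TopologicalSpace.SeparableSpace 𝓗]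
    (U U₀ : 𝓗 →L[ℂ] 𝓗) (hU : U ∈ unitary (𝓗 →L[ℂ] 𝓗)) (hU₀ : U₀ ∈ unitary (𝓗 →L[ℂ] 𝓗))
    (hV : IsTraceClass (U - U₀)) :
    ∃ C G : 𝓗 →L[ℂ] 𝓗, C.IsPositive ∧ IsHilbertSchmidt C ∧ ‖G‖ ≤ 2 ∧
      U - U₀ = C * G * C :=
  traceClass_difference_factorization_general U U₀ hV
end

section
/- Let H and H₀ be bounded self-adjoint operators on a complex Hilbert space 𝓗 with Cayley transforms U := (i − H)(i + H)⁻¹ and U₀ := (i − H₀)(i + H₀)⁻¹, and let Q be a bounded operator on 𝓗 commuting with H₀ (Q H₀ = H₀ Q). Then −(i/2)·U*·[U − U₀, Q] = (H − i)⁻¹ [H, Q] (H + i)⁻¹. -/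
open ContinuousLinearMap

variable {𝓗 : Type*} [NormedAddCommGroup 𝓗] [InnerProductSpace ℂ 𝓗] [CompleteSpace 𝓗]

/-!
With `R = (i + H)⁻¹` one has `U = 2i R - 1`, so `[U, Q] = 2i [R, Q] = 2i R [Q, H] R`, and
`U* R = -(H - i)⁻¹ (i + H) R = -(H - i)⁻¹`. Since `Q` commutes with `H₀`, it commutes with `U₀`,
so `[U - U₀, Q] = [U, Q]` and the scalar `-(i/2) · 2i = 1` gives the identity.
-/

theorem Commute.ringInverse_right {M₀ : Type*} [MonoidWithZero M₀] {a b : M₀}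
    (h : Commute a b) : Commute a (Ring.inverse b) := by
  by_cases hb : IsUnit b
  · obtain ⟨u, rfl⟩ := hb
    simpa only [Ring.inverse_unit] using h.units_inv_right
  · simp only [Ring.inverse_non_unit _ hb, Commute.zero_right]

theorem Ring.inverse_mul_sub_mul_inverse {R : Type*} [Ring R] {a : R} (ha : IsUnit a) (q : R) :
    Ring.inverse a * q - q * Ring.inverse a =
      Ring.inverse a * (q * a - a * q) * Ring.inverse a := by
  have h₁ : a * Ring.inverse a = 1 := Ring.mul_inverse_cancel a ha
  have h₂ : Ring.inverse a * a = 1 := Ring.inverse_mul_cancel a ha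
  calc Ring.inverse a * q - q * Ring.inverse a
      = Ring.inverse a * q * (a * Ring.inverse a) - (Ring.inverse a * a) * q * Ring.inverse a := by
        rw [h₁, h₂, mul_one, one_mul]
    _ = Ring.inverse a * (q * a - a * q) * Ring.inverse a := by noncomm_ring

theorem IsSelfAdjoint.isUnit_I_smul_one_add {A : Type*} [CStarAlgebra A] {a : A}
    (ha : IsSelfAdjoint a) : IsUnit (Complex.I • (1 : A) + a) := by
  have hI : Complex.I ∉ spectrum ℂ (-a) := fun hmem => by
    simpa [Complex.ext_iff] using ha.neg.mem_spectrum_eq_re hmem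
  simpa [spectrum.notMem_iff, Algebra.algebraMap_eq_smul_one] using hI

omit [CompleteSpace 𝓗] in
theorem commute_cayley {H Q : 𝓗 →L[ℂ] 𝓗} (h : Commute Q H) : Commute Q (cayley H) :=
  ((Commute.smul_right (.one_right Q) _).sub_right h).mul_right
    ((Commute.smul_right (.one_right Q) _).add_right h).ringInverse_right

theorem cayley_eq_two_I_smul_inverse_sub_one {H : 𝓗 →L[ℂ] 𝓗} (hH : IsSelfAdjoint H) :
    cayley H = (2 * Complex.I) • Ring.inverse (Complex.I • 1 + H) - 1 := by
  have hjH : Complex.I • 1 - H = (2 * Complex.I) • (1 : 𝓗 →L[ℂ] 𝓗) - (Complex.I • 1 + H) := by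
    module
  rw [cayley, hjH, sub_mul, smul_mul_assoc, one_mul,
    Ring.mul_inverse_cancel _ hH.isUnit_I_smul_one_add]

theorem cayley_mul_sub_mul_cayley {H : 𝓗 →L[ℂ] 𝓗} (hH : IsSelfAdjoint H) (Q : 𝓗 →L[ℂ] 𝓗) :
    cayley H * Q - Q * cayley H =
      (2 * Complex.I) • (Ring.inverse (Complex.I • 1 + H) * (Q * H - H * Q) *
        Ring.inverse (Complex.I • 1 + H)) := by
  have hcomm : Q * (Complex.I • 1 + H) - (Complex.I • 1 + H) * Q = Q * H - H * Q := by
    simp only [mul_add, add_mul, mul_smul_comm, smul_mul_assoc, mul_one, one_mul]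
    abel
  rw [← hcomm, ← Ring.inverse_mul_sub_mul_inverse hH.isUnit_I_smul_one_add,
    cayley_eq_two_I_smul_inverse_sub_one hH]
  simp only [sub_mul, mul_sub, smul_mul_assoc, mul_smul_comm, one_mul, mul_one, smul_sub]
  abel

theorem star_cayley_mul_inverse {H : 𝓗 →L[ℂ] 𝓗} (hH : IsSelfAdjoint H) :
    star (cayley H) * Ring.inverse (Complex.I • 1 + H) = -Ring.inverse (H - Complex.I • 1) := by
  have hstar : star (Complex.I • 1 - H) = -(Complex.I • 1 + H) := by
    rw [star_sub, star_smul, star_one, Complex.star_def, Complex.conj_I, hH.star_eq, neg_smul,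
      neg_add']
  have hstar' : star (Complex.I • 1 + H) = H - Complex.I • (1 : 𝓗 →L[ℂ] 𝓗) := by
    rw [star_add, star_smul, star_one, Complex.star_def, Complex.conj_I, hH.star_eq, neg_smul,
      neg_add_eq_sub]
  rw [cayley, star_mul, hstar, ← Ring.inverse_star, hstar', mul_neg, neg_mul, mul_assoc,
    Ring.mul_inverse_cancel _ hH.isUnit_I_smul_one_add, mul_one]

theorem cayley_commutator_identity_general
    (H H₀ Q : 𝓗 →L[ℂ] 𝓗) (hH : IsSelfAdjoint H)
    (hQ : Q * H₀ = H₀ * Q) :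
    (-(Complex.I / 2)) • (star (cayley H) *
        ((cayley H - cayley H₀) * Q - Q * (cayley H - cayley H₀))) =
      Ring.inverse (H - Complex.I • (1 : 𝓗 →L[ℂ] 𝓗)) * (H * Q - Q * H) *
        Ring.inverse (H + Complex.I • (1 : 𝓗 →L[ℂ] 𝓗)) := by
  have hU₀ : Q * cayley H₀ = cayley H₀ * Q := (commute_cayley hQ).eq
  have hcomm : (cayley H - cayley H₀) * Q - Q * (cayley H - cayley H₀) =
      cayley H * Q - Q * cayley H := by
    rw [sub_mul, mul_sub, hU₀]
    abel
  have hscalar : -(Complex.I / 2) * (2 * Complex.I) = 1 := by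
    linear_combination -Complex.I_mul_I
  rw [hcomm, cayley_mul_sub_mul_cayley hH, mul_smul_comm, smul_smul, hscalar, one_smul,
    ← mul_assoc, ← mul_assoc, star_cayley_mul_inverse hH, add_comm H, ← neg_sub (Q * H),
    mul_neg, neg_mul, neg_mul]

/-- For bounded self-adjoint operators `H`, `H₀` with Cayley transforms
`U`, `U₀`, and a bounded operator `Q` commuting with `H₀`, one has
`-(i/2) U* [U - U₀, Q] = (H - i)⁻¹ [H, Q] (H + i)⁻¹`. -/
theorem cayley_commutator_identity
    (H H₀ Q : 𝓗 →L[ℂ] 𝓗) (hH : IsSelfAdjoint H) (hH₀ : IsSelfAdjoint H₀)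
    (hQ : Q * H₀ = H₀ * Q) :
    (-(Complex.I / 2)) • (star (cayley H) *
        ((cayley H - cayley H₀) * Q - Q * (cayley H - cayley H₀))) =
      Ring.inverse (H - Complex.I • (1 : 𝓗 →L[ℂ] 𝓗)) * (H * Q - Q * H) *
        Ring.inverse (H + Complex.I • (1 : 𝓗 →L[ℂ] 𝓗)) :=
  cayley_commutator_identity_general H H₀ Q hH hQ
end

section
/- Let H and H₀ be bounded self-adjoint operators on a complex Hilbert space 𝓗 and let Q be a bounded operator on 𝓗 commuting with H₀ (Q H₀ = H₀ Q). Then (H − i)⁻¹ [H, Q] (H + i)⁻¹ = −(I + 2i(H − i)⁻¹) · [(H + i)⁻¹ − (H₀ + i)⁻¹, Q]. In particular, if (H + i)⁻¹ − (H₀ + i)⁻¹ is trace class, then K := (H − i)⁻¹ [H, Q] (H + i)⁻¹ is trace class and ‖K‖₁ ≤ 6 · ‖Q‖ · ‖(H + i)⁻¹ − (H₀ + i)⁻¹‖₁. -/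
/-!
Write `A = H + i` and `B = H - i = A⋆`. Since `A⁻¹ [A, Q] A⁻¹ = [Q, A⁻¹]` and `[H, Q] = [A, Q]`,
`B⁻¹ [H, Q] A⁻¹ = -(B⁻¹ A) [A⁻¹, Q]`, and `A⁻¹` may be replaced by `D = A⁻¹ - (H₀ + i)⁻¹` in the
commutator because `(H₀ + i)⁻¹` commutes with `Q`; finally `B⁻¹ A = 1 + 2i B⁻¹`. The factor `B⁻¹ A`
is unitary (`A` is normal), so it does not change trace norms, and every bounded `Q` is a
combination of four unitaries with coefficients of modulus at most `‖Q‖ / 2`, so that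
`‖D Q‖₁, ‖Q D‖₁ ≤ 2 ‖Q‖ ‖D‖₁`. Hence `‖K‖₁ ≤ 4 ‖Q‖ ‖D‖₁ ≤ 6 ‖Q‖ ‖D‖₁`.
-/

open ContinuousLinearMap

variable {𝓗 : Type*} [NormedAddCommGroup 𝓗] [InnerProductSpace ℂ 𝓗] [CompleteSpace 𝓗]

open scoped Ring

section TraceNorm

variable {E : Type*} [NormedAddCommGroup E] [InnerProductSpace ℂ E]

def TraceNormLE (T : E →L[ℂ] E) (c : ℝ) : Prop :=
  ∀ (n : ℕ) (e f : Fin n → E), Orthonormal ℂ e → Orthonormal ℂ f →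
    ∑ i, ‖(inner ℂ (f i) (T (e i)) : ℂ)‖ ≤ c

theorem IsTraceClass.traceNormLE {T : E →L[ℂ] E} (h : IsTraceClass T) :
    TraceNormLE T (traceNorm T) := by
  obtain ⟨M, hM⟩ := h
  intro n e f he hf
  refine le_csSup ⟨M, ?_⟩ ⟨n, e, f, he, hf, rfl⟩
  rintro x ⟨n, e, f, he, hf, rfl⟩
  exact hM n e f he hf

namespace TraceNormLE

variable {T T' : E →L[ℂ] E} {c c' : ℝ}

theorem nonneg (h : TraceNormLE T c) : 0 ≤ c := by
  simpa using h 0 Fin.elim0 Fin.elim0 (.of_isEmpty _) (.of_isEmpty _)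

theorem isTraceClass (h : TraceNormLE T c) : IsTraceClass T := ⟨c, h⟩

theorem traceNorm_le (h : TraceNormLE T c) : traceNorm T ≤ c := by
  refine csSup_le ⟨_, 0, Fin.elim0, Fin.elim0, .of_isEmpty _, .of_isEmpty _, rfl⟩ ?_
  rintro x ⟨n, e, f, he, hf, rfl⟩
  exact h n e f he hf

theorem mono (h : TraceNormLE T c) (hc : c ≤ c') : TraceNormLE T c' :=
  fun n e f he hf => (h n e f he hf).trans hc

theorem zero : TraceNormLE (0 : E →L[ℂ] E) 0 := fun n e f _ _ => by simp

theorem add (h : TraceNormLE T c) (h' : TraceNormLE T' c') : TraceNormLE (T + T') (c + c') := by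
  intro n e f he hf
  calc ∑ i, ‖(inner ℂ (f i) ((T + T') (e i)) : ℂ)‖
      ≤ ∑ i, (‖(inner ℂ (f i) (T (e i)) : ℂ)‖ + ‖(inner ℂ (f i) (T' (e i)) : ℂ)‖) :=
        Finset.sum_le_sum fun i _ => by
          rw [add_apply, inner_add_right]
          exact norm_add_le _ _
    _ ≤ c + c' := by
        rw [Finset.sum_add_distrib]
        exact add_le_add (h n e f he hf) (h' n e f he hf)

theorem smul (z : ℂ) (h : TraceNormLE T c) : TraceNormLE (z • T) (‖z‖ * c) := by
  intro n e f he hf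
  simp only [smul_apply, inner_smul_right, norm_mul, ← Finset.mul_sum]
  exact mul_le_mul_of_nonneg_left (h n e f he hf) (norm_nonneg z)

theorem neg (h : TraceNormLE T c) : TraceNormLE (-T) c := by
  simpa using h.smul (-1)

theorem sub (h : TraceNormLE T c) (h' : TraceNormLE T' c') : TraceNormLE (T - T') (c + c') := by
  simpa only [sub_eq_add_neg] using h.add h'.neg

theorem sum {ι : Type*} (s : Finset ι) {T : ι → E →L[ℂ] E} {c : ι → ℝ}
    (h : ∀ i ∈ s, TraceNormLE (T i) (c i)) : TraceNormLE (∑ i ∈ s, T i) (∑ i ∈ s, c i) := by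
  classical
  induction s using Finset.induction_on with
  | empty => simpa using zero
  | insert i s hi ih =>
    rw [Finset.sum_insert hi, Finset.sum_insert hi]
    exact (h i (Finset.mem_insert_self i s)).add (ih fun j hj => h j (Finset.mem_insert_of_mem hj))

variable [CompleteSpace E]

theorem star (h : TraceNormLE T c) : TraceNormLE (star T) c := fun n e f he hf => by
  simpa [star_eq_adjoint, adjoint_inner_right, norm_inner_symm] using h n f e hf he

theorem unitary_mul {U : E →L[ℂ] E} (hU : U ∈ unitary (E →L[ℂ] E)) (h : TraceNormLE T c) :
    TraceNormLE (U * T) c := by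
  intro n e f he hf
  have hf' : Orthonormal ℂ (⇑(Star.star U) ∘ f) :=
    hf.comp_linearIsometry (Unitary.linearIsometryEquiv ⟨_, Unitary.star_mem hU⟩).toLinearIsometry
  convert h n e _ he hf' using 3 with i
  rw [Function.comp_apply, star_eq_adjoint, adjoint_inner_left]
  rfl

theorem mul_left (X : E →L[ℂ] E) (h : TraceNormLE T c) : TraceNormLE (X * T) (2 * ‖X‖ * c) := by
  obtain ⟨u, a, hX, ha⟩ := CStarAlgebra.exists_sum_four_unitary X
  have hsum : TraceNormLE (X * T) (∑ i, ‖a i‖ * c) := by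
    rw [hX, Finset.sum_mul]
    exact sum _ fun i _ => by
      rw [smul_mul_assoc]
      exact (h.unitary_mul (u i).2).smul (a i)
  refine hsum.mono ?_
  calc ∑ i, ‖a i‖ * c ≤ ∑ _i : Fin 4, ‖X‖ / 2 * c :=
        Finset.sum_le_sum fun i _ => mul_le_mul_of_nonneg_right (ha i) h.nonneg
    _ = 2 * ‖X‖ * c := by simp only [Finset.sum_const, Finset.card_fin]; ring

theorem mul_right (X : E →L[ℂ] E) (h : TraceNormLE T c) : TraceNormLE (T * X) (2 * ‖X‖ * c) := by
  simpa only [star_mul, star_star, norm_star] using (h.star.mul_left (Star.star X)).star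

theorem mul_sub_mul (Q : E →L[ℂ] E) (h : TraceNormLE T c) :
    TraceNormLE (T * Q - Q * T) (4 * ‖Q‖ * c) := by
  convert (h.mul_right Q).sub (h.mul_left Q) using 1
  ring

end TraceNormLE

end TraceNorm

section Ring

variable {R : Type*} [Ring R]

theorem Commute.ringInverse_left {a b : R} (h : Commute a b) : Commute a⁻¹ʳ b := by
  by_cases ha : IsUnit a
  · obtain ⟨u, rfl⟩ := ha
    rw [Ring.inverse_unit]
    exact h.units_inv_left
  · rw [Ring.inverse_non_unit a ha]
    exact Commute.zero_left b

theorem mul_commutator_mul_ringInverse {a : R} (ha : IsUnit a) (b q : R) :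
    b * (a * q - q * a) * a⁻¹ʳ = -(b * a * (a⁻¹ʳ * q - q * a⁻¹ʳ)) := by
  have h₁ : a * a⁻¹ʳ = 1 := Ring.mul_inverse_cancel a ha
  have h₁' : a * (a⁻¹ʳ * q) = q := by rw [← mul_assoc, h₁, one_mul]
  simp only [mul_sub, sub_mul, mul_assoc, h₁, h₁', mul_one, neg_sub]

theorem commutator_sub_of_commute {r r₀ q : R} (h : Commute r₀ q) :
    r * q - q * r = (r - r₀) * q - q * (r - r₀) := by
  rw [sub_mul, mul_sub, h.eq]
  abel

theorem one_add_smul_ringInverse_sub_smul_one {𝕜 : Type*} [CommRing 𝕜] [Algebra 𝕜 R] {a : R}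
    {z : 𝕜} (ha : IsUnit (a - z • 1)) :
    1 + (2 * z) • (a - z • 1)⁻¹ʳ = (a - z • 1)⁻¹ʳ * (a + z • 1) := by
  have hsplit : a + z • 1 = (a - z • 1) + (2 * z) • 1 := by module
  rw [hsplit, mul_add, Ring.inverse_mul_cancel _ ha, mul_smul_comm, mul_one]

theorem ringInverse_star_mul_mem_unitary [StarRing R] {a : R} (ha : IsUnit a)
    (hn : IsStarNormal a) : (star a)⁻¹ʳ * a ∈ unitary R := by
  refine ((ha.star.ringInverse).mul ha).mem_unitary_of_star_mul_self ?_
  have hinv : Commute a⁻¹ʳ (star a)⁻¹ʳ := hn.star_comm_self.symm.ringInverse_ringInverse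
  calc star ((star a)⁻¹ʳ * a) * ((star a)⁻¹ʳ * a)
      = star a * ((star a)⁻¹ʳ * a⁻¹ʳ) * a := by
        rw [star_mul, ← Ring.inverse_star, star_star, ← hinv.eq]
        simp only [mul_assoc]
    _ = 1 := by
        rw [← mul_assoc, Ring.mul_inverse_cancel _ ha.star, one_mul, Ring.inverse_mul_cancel _ ha]

end Ring

section CStarAlgebra

variable {A : Type*} [CStarAlgebra A] {a : A}

theorem IsSelfAdjoint.isUnit_sub_smul_one (ha : IsSelfAdjoint a) {z : ℂ} (hz : z.im ≠ 0) :
    IsUnit (a - z • 1) := by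
  have hz : z ∉ spectrum ℂ a := fun h => hz (ha.im_eq_zero_of_mem_spectrum h)
  simpa [Algebra.algebraMap_eq_smul_one] using (spectrum.notMem_iff.mp hz).neg

theorem IsSelfAdjoint.isUnit_add_I_smul_one (ha : IsSelfAdjoint a) :
    IsUnit (a + Complex.I • 1) := by
  simpa [sub_eq_add_neg] using ha.isUnit_sub_smul_one (z := -Complex.I) (by simp)

theorem IsSelfAdjoint.ringInverse_sub_I_mul_add_I_mem_unitary (ha : IsSelfAdjoint a) :
    (a - Complex.I • 1)⁻¹ʳ * (a + Complex.I • 1) ∈ unitary A := by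
  have := ha.isStarNormal
  have hn : IsStarNormal (a + Complex.I • 1) := Commute.isStarNormal_add (by simp)
  have hstar : star (a + Complex.I • 1) = a - Complex.I • 1 := by
    simp [ha.star_eq, sub_eq_add_neg]
  exact hstar ▸ ringInverse_star_mul_mem_unitary ha.isUnit_add_I_smul_one hn

end CStarAlgebra

theorem resolvent_commutator_traceClass_general
    (H H₀ Q : 𝓗 →L[ℂ] 𝓗) (hH : IsSelfAdjoint H)
    (hQ : Q * H₀ = H₀ * Q) :
    (Ring.inverse (H - Complex.I • (1 : 𝓗 →L[ℂ] 𝓗)) * (H * Q - Q * H) *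
        Ring.inverse (H + Complex.I • (1 : 𝓗 →L[ℂ] 𝓗)) =
      -(((1 : 𝓗 →L[ℂ] 𝓗) + (2 * Complex.I) • Ring.inverse (H - Complex.I • (1 : 𝓗 →L[ℂ] 𝓗))) *
        ((Ring.inverse (H + Complex.I • (1 : 𝓗 →L[ℂ] 𝓗)) -
            Ring.inverse (H₀ + Complex.I • (1 : 𝓗 →L[ℂ] 𝓗))) * Q -
          Q * (Ring.inverse (H + Complex.I • (1 : 𝓗 →L[ℂ] 𝓗)) -
            Ring.inverse (H₀ + Complex.I • (1 : 𝓗 →L[ℂ] 𝓗)))))) ∧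
      (IsTraceClass (Ring.inverse (H + Complex.I • (1 : 𝓗 →L[ℂ] 𝓗)) -
          Ring.inverse (H₀ + Complex.I • (1 : 𝓗 →L[ℂ] 𝓗))) →
        IsTraceClass (Ring.inverse (H - Complex.I • (1 : 𝓗 →L[ℂ] 𝓗)) * (H * Q - Q * H) *
            Ring.inverse (H + Complex.I • (1 : 𝓗 →L[ℂ] 𝓗))) ∧
          traceNorm (Ring.inverse (H - Complex.I • (1 : 𝓗 →L[ℂ] 𝓗)) * (H * Q - Q * H) *
              Ring.inverse (H + Complex.I • (1 : 𝓗 →L[ℂ] 𝓗))) ≤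
            6 * ‖Q‖ * traceNorm (Ring.inverse (H + Complex.I • (1 : 𝓗 →L[ℂ] 𝓗)) -
              Ring.inverse (H₀ + Complex.I • (1 : 𝓗 →L[ℂ] 𝓗)))) := by
  set A := H + Complex.I • (1 : 𝓗 →L[ℂ] 𝓗)
  set B := H - Complex.I • (1 : 𝓗 →L[ℂ] 𝓗)
  set A₀ := H₀ + Complex.I • (1 : 𝓗 →L[ℂ] 𝓗)
  have hW : 1 + (2 * Complex.I) • B⁻¹ʳ = B⁻¹ʳ * A :=
    one_add_smul_ringInverse_sub_smul_one (hH.isUnit_sub_smul_one (by simp))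
  have hHA : H * Q - Q * H = A * Q - Q * A := by
    simp only [A, add_mul, mul_add, smul_mul_assoc, mul_smul_comm, one_mul, mul_one]
    abel
  have hA₀Q : Commute A₀⁻¹ʳ Q := by
    refine Commute.ringInverse_left ?_
    simp only [Commute, SemiconjBy, A₀, add_mul, mul_add, hQ, smul_mul_assoc, mul_smul_comm,
      one_mul, mul_one]
  have hK : B⁻¹ʳ * (H * Q - Q * H) * A⁻¹ʳ =
      -((1 + (2 * Complex.I) • B⁻¹ʳ) * ((A⁻¹ʳ - A₀⁻¹ʳ) * Q - Q * (A⁻¹ʳ - A₀⁻¹ʳ))) := by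
    rw [hHA, mul_commutator_mul_ringInverse hH.isUnit_add_I_smul_one, hW, commutator_sub_of_commute hA₀Q]
  refine ⟨hK, fun hD => ?_⟩
  have hbound := ((hD.traceNormLE.mul_sub_mul Q).unitary_mul
    hH.ringInverse_sub_I_mul_add_I_mem_unitary).neg
  rw [hK, hW]
  refine ⟨hbound.isTraceClass, hbound.traceNorm_le.trans ?_⟩
  nlinarith [norm_nonneg Q, hD.traceNormLE.nonneg]

/-- equations (2.4x)–(2.5x).  For bounded self-adjoint `H`, `H₀` and a
bounded operator `Q` commuting with `H₀`:
`(H - i)⁻¹ [H, Q] (H + i)⁻¹ = -(I + 2i (H - i)⁻¹) [(H + i)⁻¹ - (H₀ + i)⁻¹, Q]`;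
in particular if `(H + i)⁻¹ - (H₀ + i)⁻¹` is trace class then
`K := (H - i)⁻¹ [H, Q] (H + i)⁻¹` is trace class with
`‖K‖₁ ≤ 6 ‖Q‖ ‖(H + i)⁻¹ - (H₀ + i)⁻¹‖₁`. -/
theorem resolvent_commutator_traceClass
    (H H₀ Q : 𝓗 →L[ℂ] 𝓗) (hH : IsSelfAdjoint H) (hH₀ : IsSelfAdjoint H₀)
    (hQ : Q * H₀ = H₀ * Q) :
    (Ring.inverse (H - Complex.I • (1 : 𝓗 →L[ℂ] 𝓗)) * (H * Q - Q * H) *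
        Ring.inverse (H + Complex.I • (1 : 𝓗 →L[ℂ] 𝓗)) =
      -(((1 : 𝓗 →L[ℂ] 𝓗) + (2 * Complex.I) • Ring.inverse (H - Complex.I • (1 : 𝓗 →L[ℂ] 𝓗))) *
        ((Ring.inverse (H + Complex.I • (1 : 𝓗 →L[ℂ] 𝓗)) -
            Ring.inverse (H₀ + Complex.I • (1 : 𝓗 →L[ℂ] 𝓗))) * Q -
          Q * (Ring.inverse (H + Complex.I • (1 : 𝓗 →L[ℂ] 𝓗)) -
            Ring.inverse (H₀ + Complex.I • (1 : 𝓗 →L[ℂ] 𝓗)))))) ∧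
      (IsTraceClass (Ring.inverse (H + Complex.I • (1 : 𝓗 →L[ℂ] 𝓗)) -
          Ring.inverse (H₀ + Complex.I • (1 : 𝓗 →L[ℂ] 𝓗))) →
        IsTraceClass (Ring.inverse (H - Complex.I • (1 : 𝓗 →L[ℂ] 𝓗)) * (H * Q - Q * H) *
            Ring.inverse (H + Complex.I • (1 : 𝓗 →L[ℂ] 𝓗))) ∧
          traceNorm (Ring.inverse (H - Complex.I • (1 : 𝓗 →L[ℂ] 𝓗)) * (H * Q - Q * H) *
              Ring.inverse (H + Complex.I • (1 : 𝓗 →L[ℂ] 𝓗))) ≤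
            6 * ‖Q‖ * traceNorm (Ring.inverse (H + Complex.I • (1 : 𝓗 →L[ℂ] 𝓗)) -
              Ring.inverse (H₀ + Complex.I • (1 : 𝓗 →L[ℂ] 𝓗)))) :=
  resolvent_commutator_traceClass_general H H₀ Q hH hQ
end

section
/- Let U and U₀ be unitary operators on a complex Hilbert space 𝓗 and suppose V := U − U₀ = C G C, where C is a bounded self-adjoint operator and G is a bounded operator on 𝓗. For ξ ∈ ℂ with |ξ| < 1 define Z(ξ) := G* + ξ·G* C (I − ξU*)⁻¹ C G*. Then (I − ξU*)⁻¹ V* = (I − ξU₀*)⁻¹ C Z(ξ) C. -/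
open ContinuousLinearMap

variable {𝓗 : Type*} [NormedAddCommGroup 𝓗] [InnerProductSpace ℂ 𝓗] [CompleteSpace 𝓗]

lemma aux_isUnit_one_sub_smul_star (W : 𝓗 →L[ℂ] 𝓗) (hW : W ∈ unitary (𝓗 →L[ℂ] 𝓗))
    (ξ : ℂ) (hξ : ‖ξ‖ < 1) : IsUnit ((1 : 𝓗 →L[ℂ] 𝓗) - ξ • star W) := by
  apply isUnit_one_sub_of_norm_lt_one
  have h1 : ‖star W‖ ≤ 1 := by
    have hsq : ‖W‖ * ‖W‖ ≤ 1 := by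
      rw [← CStarRing.norm_star_mul_self, (Unitary.mem_iff.mp hW).1]
      simpa [ContinuousLinearMap.one_def] using ContinuousLinearMap.norm_id_le (𝕜 := ℂ) (E := 𝓗)
    calc ‖star W‖ = ‖W‖ := norm_star W
    _ ≤ 1 := by nlinarith [norm_nonneg W]
  calc ‖ξ • star W‖ ≤ ‖ξ‖ * ‖star W‖ := norm_smul_le _ _
  _ ≤ ‖ξ‖ * 1 := by nlinarith [norm_nonneg ξ]
  _ < 1 := by simpa using hξ

/-- definition (2.62) and the factored resolvent identity, Appendix D.
For unitary `U`, `U₀` with `V := U - U₀ = C G C`, `C` bounded self-adjoint, `G` bounded,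
and `ξ ∈ ℂ` with `|ξ| < 1`, setting `Z(ξ) := G* + ξ G* C (I - ξU*)⁻¹ C G*`, one has
`(I - ξU*)⁻¹ V* = (I - ξU₀*)⁻¹ C Z(ξ) C`. -/
theorem unitary_resolvent_factored_identity
    (U U₀ C G : 𝓗 →L[ℂ] 𝓗) (hU : U ∈ unitary (𝓗 →L[ℂ] 𝓗)) (hU₀ : U₀ ∈ unitary (𝓗 →L[ℂ] 𝓗))
    (hC : IsSelfAdjoint C) (hV : U - U₀ = C * G * C)
    (ξ : ℂ) (hξ : ‖ξ‖ < 1) :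
    Ring.inverse ((1 : 𝓗 →L[ℂ] 𝓗) - ξ • star U) * star (U - U₀) =
      Ring.inverse ((1 : 𝓗 →L[ℂ] 𝓗) - ξ • star U₀) * C *
        (star G +
          ξ • (star G * C * Ring.inverse ((1 : 𝓗 →L[ℂ] 𝓗) - ξ • star U) * C * star G)) * C := by
  set A : 𝓗 →L[ℂ] 𝓗 := (1 : 𝓗 →L[ℂ] 𝓗) - ξ • star U with hA
  set A₀ : 𝓗 →L[ℂ] 𝓗 := (1 : 𝓗 →L[ℂ] 𝓗) - ξ • star U₀ with hA₀
  have hAu : IsUnit A := aux_isUnit_one_sub_smul_star U hU ξ hξ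
  have hA₀u : IsUnit A₀ := aux_isUnit_one_sub_smul_star U₀ hU₀ ξ hξ
  set R : 𝓗 →L[ℂ] 𝓗 := Ring.inverse A with hR
  set R₀ : 𝓗 →L[ℂ] 𝓗 := Ring.inverse A₀ with hR₀
  have hRA : R * A = 1 := Ring.inverse_mul_cancel A hAu
  have hAR : A * R = 1 := Ring.mul_inverse_cancel A hAu
  have hR₀A₀ : R₀ * A₀ = 1 := Ring.inverse_mul_cancel A₀ hA₀u
  -- star of V
  have hVs : star (U - U₀) = C * star G * C := by
    rw [hV, star_mul, star_mul, hC.star_eq, mul_assoc]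
  -- difference of resolvents
  have hkey : ξ • (C * star G * C) = A₀ - A := by
    rw [← hVs, hA, hA₀, star_sub, smul_sub]
    abel
  rw [hVs]
  set W : 𝓗 →L[ℂ] 𝓗 := C * star G * C with hW
  -- expand RHS
  have expand : R₀ * C * (star G + ξ • (star G * C * R * C * star G)) * C
      = R₀ * W + R₀ * ((ξ • W) * (R * W)) := by
    simp only [hW, mul_add, add_mul, mul_smul_comm, smul_mul_assoc, mul_assoc]
  rw [expand, hkey]
  have : R₀ * ((A₀ - A) * (R * W)) = R * W - R₀ * W := by
    rw [sub_mul, mul_sub, ← mul_assoc, hR₀A₀, one_mul, ← mul_assoc A R W, hAR, one_mul]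
  rw [this]
  abel
end

section
/- Let H be a bounded self-adjoint operator on a complex Hilbert space 𝓗, let λ ∈ ℝ, and let f ∈ 𝓗 be orthogonal to the eigenspace ker(H − λ·I). Then (1/T)·∫₀^T e^{−it(H − λ)} f dt converges in norm to 0 as T → ∞. -/
/-!
Write `e^{-it(H-λ)} = e^{tB}` with `B = -i(H-λ)` skew-adjoint. The operators `e^{tB}` are unitary,
so the means `M_T v = (1/T) ∫₀ᵀ e^{tB} v dt` are `1`-Lipschitz uniformly in `T`, and the set of `v`
with `M_T v → 0` is closed. It contains the range of `B`, because `M_T (B v) = (e^{TB} v - v)/T`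
has norm at most `2‖v‖/|T|`. Since `B` is normal, `(ker B)ᗮ` is the closure of its range.
-/

open ContinuousLinearMap Filter

variable {𝓗 : Type*} [NormedAddCommGroup 𝓗] [InnerProductSpace ℂ 𝓗] [CompleteSpace 𝓗]

open NormedSpace Topology

section Exponential
variable {E : Type*} [NormedAddCommGroup E] [NormedSpace ℂ E] [CompleteSpace E]

theorem hasDerivAt_exp_smul_apply (B : E →L[ℂ] E) (v : E) (t : ℝ) :
    HasDerivAt (fun s : ℝ => exp (s • B) v) (exp (t • B) (B v)) t :=
  ((apply ℂ E v).restrictScalars ℝ).hasFDerivAt.comp_hasDerivAt t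
    (hasDerivAt_exp_smul_const B t)

theorem continuous_exp_smul_apply (B : E →L[ℂ] E) (v : E) :
    Continuous fun t : ℝ => exp (t • B) v :=
  continuous_iff_continuousAt.mpr fun t => (hasDerivAt_exp_smul_apply B v t).continuousAt

theorem integral_exp_smul_apply_self (B : E →L[ℂ] E) (v : E) (T : ℝ) :
    ∫ t in (0 : ℝ)..T, exp (t • B) (B v) = exp (T • B) v - v := by
  rw [intervalIntegral.integral_eq_sub_of_hasDerivAt (fun t _ => hasDerivAt_exp_smul_apply B v t)
    ((continuous_exp_smul_apply B (B v)).intervalIntegrable 0 T)]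
  simp

noncomputable def ergodicMean (B : E →L[ℂ] E) (T : ℝ) (v : E) : E :=
  (1 / T) • ∫ t in (0 : ℝ)..T, exp (t • B) v

theorem ergodicMean_sub (B : E →L[ℂ] E) (T : ℝ) (v w : E) :
    ergodicMean B T (v - w) = ergodicMean B T v - ergodicMean B T w := by
  simp only [ergodicMean, map_sub, ← smul_sub]
  rw [intervalIntegral.integral_sub ((continuous_exp_smul_apply B v).intervalIntegrable 0 T)
    ((continuous_exp_smul_apply B w).intervalIntegrable 0 T)]

end Exponential

section SkewAdjoint
variable {B : 𝓗 →L[ℂ] 𝓗}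

theorem norm_exp_apply_of_mem_skewAdjoint (hB : B ∈ skewAdjoint (𝓗 →L[ℂ] 𝓗)) (v : 𝓗) :
    ‖exp B v‖ = ‖v‖ := by
  have hU : exp B ∈ unitary (𝓗 →L[ℂ] 𝓗) := by
    let : NormedAlgebra ℚ (𝓗 →L[ℂ] 𝓗) := NormedAlgebra.restrictScalars ℚ ℂ _
    exact exp_mem_unitary_of_mem_skewAdjoint hB
  exact norm_map_of_mem_unitary hU v

theorem norm_ergodicMean_le (hB : B ∈ skewAdjoint (𝓗 →L[ℂ] 𝓗)) (T : ℝ) (v : 𝓗) :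
    ‖ergodicMean B T v‖ ≤ ‖v‖ := by
  have hint : ‖∫ t in (0 : ℝ)..T, exp (t • B) v‖ ≤ ‖v‖ * |T| := by
    simpa using intervalIntegral.norm_integral_le_of_norm_le_const (a := 0) (b := T)
      fun t _ => (norm_exp_apply_of_mem_skewAdjoint (skewAdjoint.smul_mem t hB) v).le
  rw [ergodicMean, norm_smul, norm_div, norm_one, Real.norm_eq_abs, one_div]
  rcases eq_or_ne T 0 with rfl | hT
  · simp
  · calc |T|⁻¹ * ‖∫ t in (0 : ℝ)..T, exp (t • B) v‖ ≤ |T|⁻¹ * (‖v‖ * |T|) := by gcongr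
      _ = ‖v‖ := by field_simp

theorem lipschitzWith_ergodicMean (hB : B ∈ skewAdjoint (𝓗 →L[ℂ] 𝓗)) (T : ℝ) :
    LipschitzWith 1 (ergodicMean B T) :=
  LipschitzWith.of_dist_le_mul fun v w => by
    simpa [dist_eq_norm, ← ergodicMean_sub] using norm_ergodicMean_le hB T (v - w)

theorem tendsto_ergodicMean_apply_self (hB : B ∈ skewAdjoint (𝓗 →L[ℂ] 𝓗)) (v : 𝓗) :
    Tendsto (fun T => ergodicMean B T (B v)) atTop (𝓝 0) := by
  have hbound : ∀ T, ‖ergodicMean B T (B v)‖ ≤ |T⁻¹| * (2 * ‖v‖) := fun T => by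
    rw [ergodicMean, integral_exp_smul_apply_self, norm_smul, one_div, Real.norm_eq_abs]
    gcongr
    calc ‖exp (T • B) v - v‖ ≤ ‖exp (T • B) v‖ + ‖v‖ := norm_sub_le _ _
      _ = 2 * ‖v‖ := by rw [norm_exp_apply_of_mem_skewAdjoint (skewAdjoint.smul_mem T hB)]; ring
  refine squeeze_zero_norm hbound ?_
  simpa using (tendsto_inv_atTop_zero.abs).mul_const (2 * ‖v‖)

theorem tendsto_ergodicMean_zero (hB : B ∈ skewAdjoint (𝓗 →L[ℂ] 𝓗)) {f : 𝓗}
    (hf : f ∈ (LinearMap.ker B.toLinearMap)ᗮ) :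
    Tendsto (fun T => ergodicMean B T f) atTop (𝓝 0) := by
  have hclosed : IsClosed {v | Tendsto (fun T => ergodicMean B T v) atTop (𝓝 0)} :=
    (LipschitzWith.uniformEquicontinuous _ 1 (lipschitzWith_ergodicMean hB)).equicontinuous
      |>.isClosed_setOfPred_tendsto continuous_const
  have hrange : Set.range B ⊆ {v | Tendsto (fun T => ergodicMean B T v) atTop (𝓝 0)} := by
    rintro _ ⟨v, rfl⟩
    exact tendsto_ergodicMean_apply_self hB v
  rw [← (skewAdjoint.isStarNormal_of_mem hB).orthogonal_range,
    Submodule.orthogonal_orthogonal_eq_closure] at hf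
  exact hclosed.closure_subset_iff.mpr hrange hf

end SkewAdjoint

/-- ergodic-mean limit, proof of Proposition 2.1.  Let `H` be a bounded
self-adjoint operator, `λ ∈ ℝ`, and `f ⊥ ker (H - λ)`.  Then
`(1/T) ∫₀ᵀ e^{-it(H-λ)} f dt → 0` in norm as `T → ∞`. -/
theorem ergodic_mean_tendsto_zero
    (H : 𝓗 →L[ℂ] 𝓗) (hH : IsSelfAdjoint H) (lam : ℝ) (f : 𝓗)
    (hf : f ∈ (LinearMap.ker (H - (lam : ℂ) • (1 : 𝓗 →L[ℂ] 𝓗)).toLinearMap)ᗮ) :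
    Tendsto (fun T : ℝ => (1 / T) •
        ∫ t in (0 : ℝ)..T,
          (NormedSpace.exp ((-(Complex.I * (t : ℂ))) •
            (H - (lam : ℂ) • (1 : 𝓗 →L[ℂ] 𝓗)))) f)
      atTop (nhds 0) := by
  set A := H - (lam : ℂ) • (1 : 𝓗 →L[ℂ] 𝓗)
  have hA : IsSelfAdjoint A := hH.sub (IsSelfAdjoint.smul (Complex.conj_ofReal lam) (.one _))
  have hB : (-Complex.I) • A ∈ skewAdjoint (𝓗 →L[ℂ] 𝓗) :=
    hA.smul_mem_skewAdjoint (by simp [skewAdjoint.mem_iff])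
  have hker : LinearMap.ker ((-Complex.I) • A).toLinearMap = LinearMap.ker A.toLinearMap :=
    LinearMap.ker_smul _ _ (by simp)
  have hexp (t : ℝ) : (-(Complex.I * t)) • A = t • ((-Complex.I) • A) := by
    rw [← Complex.coe_smul, smul_smul]
    ring_nf
  simpa only [ergodicMean, hexp] using tendsto_ergodicMean_zero hB (hker ▸ hf)
end

section
/- Let H be a bounded self-adjoint operator on a complex Hilbert space 𝓗, let ρ be a bounded operator on 𝓗, let λ ∈ ℝ, and let P be the orthogonal projection onto the eigenspace ker(H − λ·I). Then for every f ∈ 𝓗, (1/T)·∫₀^T e^{−itH} ρ e^{itH} P f dt converges in norm to P ρ P f as T → ∞. -/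
/-!
Write `A = λ - H`. Since `e^{itH} P f = e^{itλ} P f`, the integrand is `e^{itA} (ρ P f)`, so the
claim is von Neumann's mean ergodic theorem for the unitary group `e^{itA}`: its time averages
converge strongly to the orthogonal projection onto `ker A = ran P`. On `ker A` the averages are
constant; on `ran A` they are `O(1/T)` because `∫₀ᵀ e^{itA} A dt = -i (e^{iTA} - 1)`; and since
all averages are contractions, convergence to `0` extends to the closure of `ran A`, which is
`(ker A)ᗮ`.
-/

open ContinuousLinearMap Filter

variable {𝓗 : Type*} [NormedAddCommGroup 𝓗] [InnerProductSpace ℂ 𝓗] [CompleteSpace 𝓗]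

open NormedSpace (exp)
open Complex (I)
open scoped Topology

section Banach

variable {𝕜 : Type*} [RCLike 𝕜]

theorem NormedSpace.exp_smul_one_add {𝔸 : Type*} [NormedRing 𝔸] [NormedAlgebra 𝕜 𝔸]
    [CompleteSpace 𝔸] (c : 𝕜) (a : 𝔸) : exp (c • 1 + a) = exp c • exp a := by
  let +nondep : NormedAlgebra ℚ 𝔸 := .restrictScalars ℚ 𝕜 𝔸
  rw [exp_add_of_commute ((Commute.one_left a).smul_left c), ← Algebra.algebraMap_eq_smul_one,
    ← algebraMap_exp_comm, Algebra.smul_def]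

variable {E : Type*} [NormedAddCommGroup E] [NormedSpace 𝕜 E] [CompleteSpace E]

theorem ContinuousLinearMap.exp_apply_of_apply_eq_zero {A : E →L[𝕜] E} {v : E} (hv : A v = 0) :
    exp A v = v := by
  have hpow : ∀ n ≠ 0, (A ^ n) v = 0 := fun n hn => by
    obtain ⟨n, rfl⟩ := Nat.exists_eq_succ_of_ne_zero hn
    simp [pow_succ, hv]
  have hsum := (apply 𝕜 E v).map_tsum (NormedSpace.expSeries_summable' (𝕂 := 𝕜) A)
  simp only [apply_apply] at hsum
  rw [NormedSpace.exp_eq_tsum 𝕜, hsum, tsum_eq_single 0 fun n hn => by simp [hpow n hn]]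
  simp

theorem ContinuousLinearMap.exp_apply_of_apply_eq_smul {A : E →L[𝕜] E} {c : 𝕜} {v : E}
    (hv : A v = c • v) : exp A v = exp c • v := by
  have hv' : (-(c • 1) + A) v = 0 := by simp [hv]
  calc exp A v = exp (c • 1 + (-(c • 1) + A)) v := by rw [add_neg_cancel_left]
    _ = exp c • v := by
      rw [NormedSpace.exp_smul_one_add, smul_apply, exp_apply_of_apply_eq_zero hv']

theorem exp_neg_smul_conj_apply_of_apply_eq_smul {H : E →L[𝕜] E} {c : 𝕜} {v : E}
    (hv : H v = c • v) (ρ : E →L[𝕜] E) (s : 𝕜) :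
    exp ((-s) • H) (ρ (exp (s • H) v)) = exp (s • (c • 1 - H)) (ρ v) := by
  have hsv : (s • H) v = (s * c) • v := by rw [smul_apply, hv, smul_smul]
  rw [exp_apply_of_apply_eq_smul hsv, map_smul, map_smul, smul_sub, smul_smul, sub_eq_add_neg,
    ← neg_smul, NormedSpace.exp_smul_one_add, smul_apply]

end Banach

section UnitaryGroup

variable {A : 𝓗 →L[ℂ] 𝓗}

theorem exp_I_mul_smul_mem_unitary (hA : IsSelfAdjoint A) (t : ℝ) :
    exp ((I * t) • A) ∈ unitary (𝓗 →L[ℂ] 𝓗) := by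
  let +nondep : NormedAlgebra ℚ (𝓗 →L[ℂ] 𝓗) := .restrictScalars ℚ ℂ _
  refine NormedSpace.exp_mem_unitary_of_mem_skewAdjoint (hA.smul_mem_skewAdjoint ?_)
  simp [skewAdjoint.mem_iff, Complex.conj_ofReal]

theorem norm_exp_I_mul_smul_le_one (hA : IsSelfAdjoint A) (t : ℝ) :
    ‖exp ((I * t) • A)‖ ≤ 1 :=
  opNorm_le_bound _ zero_le_one fun x => by
    rw [norm_map_of_mem_unitary (exp_I_mul_smul_mem_unitary hA t), one_mul]

theorem continuous_exp_I_mul_smul (A : 𝓗 →L[ℂ] 𝓗) :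
    Continuous fun t : ℝ => exp ((I * t) • A) := by
  let +nondep : NormedAlgebra ℚ (𝓗 →L[ℂ] 𝓗) := .restrictScalars ℚ ℂ _
  fun_prop

theorem hasDerivAt_exp_I_mul_smul (A : 𝓗 →L[ℂ] 𝓗) (t : ℝ) :
    HasDerivAt (fun s : ℝ => exp ((I * s) • A)) (exp ((I * t) • A) * (I • A)) t := by
  have hsmul : ∀ s : ℝ, (I * s) • A = s • (I • A) := fun s => by
    rw [mul_comm, ← smul_smul, Complex.coe_smul]
  simp only [hsmul]
  exact hasDerivAt_exp_smul_const (I • A) t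

theorem integral_exp_I_mul_smul_mul (A : 𝓗 →L[ℂ] 𝓗) (T : ℝ) :
    ∫ t in (0 : ℝ)..T, exp ((I * t) • A) * A = (-I) • (exp ((I * T) • A) - 1) := by
  have hFTC := intervalIntegral.integral_eq_sub_of_hasDerivAt
    (fun t _ => hasDerivAt_exp_I_mul_smul A t)
    (((continuous_exp_I_mul_smul A).mul continuous_const).intervalIntegrable 0 T)
  simp only [mul_smul_comm, intervalIntegral.integral_smul, Complex.ofReal_zero, mul_zero,
    zero_smul, NormedSpace.exp_zero] at hFTC
  rw [← hFTC, smul_smul, neg_mul, Complex.I_mul_I, neg_neg, one_smul]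

end UnitaryGroup

section TimeAverage

variable {A : 𝓗 →L[ℂ] 𝓗}

noncomputable def timeAverage (A : 𝓗 →L[ℂ] 𝓗) (T : ℝ) : 𝓗 →L[ℂ] 𝓗 :=
  (1 / T) • ∫ t in (0 : ℝ)..T, exp ((I * t) • A)

theorem timeAverage_apply (A : 𝓗 →L[ℂ] 𝓗) (T : ℝ) (x : 𝓗) :
    timeAverage A T x = (1 / T) • ∫ t in (0 : ℝ)..T, exp ((I * t) • A) x := by
  rw [timeAverage, smul_apply,
    intervalIntegral_apply ((continuous_exp_I_mul_smul A).intervalIntegrable 0 T)]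

theorem norm_timeAverage_le (hA : IsSelfAdjoint A) (T : ℝ) : ‖timeAverage A T‖ ≤ 1 := by
  rcases eq_or_ne T 0 with rfl | hT
  · simp [timeAverage]
  calc ‖timeAverage A T‖ ≤ ‖1 / T‖ * (1 * |T - 0|) := by
        rw [timeAverage, norm_smul]
        gcongr
        exact intervalIntegral.norm_integral_le_of_norm_le_const fun t _ =>
          norm_exp_I_mul_smul_le_one hA t
    _ = 1 := by simp [hT]

theorem timeAverage_apply_of_apply_eq_zero {x : 𝓗} (hx : A x = 0) {T : ℝ} (hT : T ≠ 0) :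
    timeAverage A T x = x := by
  have hfix : ∀ t : ℝ, exp ((I * t) • A) x = x := fun t =>
    exp_apply_of_apply_eq_zero (by simp [hx])
  simp [timeAverage_apply, hfix, hT]

theorem tendsto_timeAverage_mul_self (hA : IsSelfAdjoint A) :
    Tendsto (fun T => timeAverage A T * A) atTop (𝓝 0) := by
  have hmul : ∀ T, timeAverage A T * A = (1 / T) • (-I) • (exp ((I * T) • A) - 1) := fun T => by
    rw [timeAverage, smul_mul_assoc, ← integral_exp_I_mul_smul_mul]
    congr 1
    exact (((ContinuousLinearMap.mul ℂ _).flip A).intervalIntegral_comp_comm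
      ((continuous_exp_I_mul_smul A).intervalIntegrable (μ := MeasureTheory.volume) 0 T)).symm
  simp only [hmul, one_div]
  refine tendsto_inv_atTop_zero.zero_smul_isBoundedUnder_le (isBoundedUnder_of ⟨2, fun T => ?_⟩)
  calc ‖(-I) • (exp ((I * T) • A) - 1)‖ ≤ ‖exp ((I * T) • A)‖ + ‖(1 : 𝓗 →L[ℂ] 𝓗)‖ := by
        rw [norm_smul, norm_neg, Complex.norm_I, one_mul]
        exact norm_sub_le _ _
    _ ≤ 1 + 1 := add_le_add (norm_exp_I_mul_smul_le_one hA T) norm_id_le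
    _ = 2 := one_add_one_eq_two

end TimeAverage

section MeanErgodic

variable {A : 𝓗 →L[ℂ] 𝓗}

theorem tendsto_timeAverage_apply_of_mem_orthogonal_ker (hA : IsSelfAdjoint A) {x : 𝓗}
    (hx : x ∈ A.kerᗮ) : Tendsto (timeAverage A · x) atTop (𝓝 0) := by
  have hbdd : ∃ C, ∀ T, ‖timeAverage A T‖ ≤ C := ⟨1, norm_timeAverage_le hA⟩
  have hequi : Equicontinuous fun T => ⇑(timeAverage A T) :=
    ((NormedSpace.equicontinuous_TFAE (timeAverage A)).out 5 1).mp hbdd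
  have hclosed : IsClosed {x | Tendsto (timeAverage A · x) atTop (𝓝 0)} :=
    hequi.isClosed_setOfPred_tendsto continuous_const
  have hrange : (A.range : Set 𝓗) ⊆ {x | Tendsto (timeAverage A · x) atTop (𝓝 0)} := by
    rintro _ ⟨u, rfl⟩
    simpa [Function.comp_def] using
      ((apply ℂ 𝓗 u).continuous.tendsto 0).comp (tendsto_timeAverage_mul_self hA)
  have hclosure : A.kerᗮ = A.range.topologicalClosure := by
    rw [← Submodule.orthogonal_orthogonal_eq_closure, orthogonal_range, hA.adjoint_eq]
  rw [hclosure, ← SetLike.mem_coe, Submodule.topologicalClosure_coe] at hx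
  exact closure_minimal hrange hclosed hx

theorem tendsto_timeAverage_apply (hA : IsSelfAdjoint A) (x : 𝓗) :
    Tendsto (timeAverage A · x) atTop (𝓝 (A.ker.starProjection x)) := by
  have hfix : ∀ᶠ T in atTop, timeAverage A T (A.ker.starProjection x) = A.ker.starProjection x :=
    (eventually_ne_atTop 0).mono fun T hT =>
      timeAverage_apply_of_apply_eq_zero (A.ker.starProjection_apply_mem x) hT
  have hrest := tendsto_timeAverage_apply_of_mem_orthogonal_ker hA
    (A.ker.sub_starProjection_mem_orthogonal x)
  simpa using (tendsto_const_nhds.congr' (hfix.mono fun _ h => h.symm)).add hrest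

end MeanErgodic

/-- the eigenvalue contribution to the ergodic limit `ρ₊`, proof of
Proposition 2.1.  Let `H` be a bounded self-adjoint operator, `ρ` a bounded operator,
`λ ∈ ℝ`, and `P` the orthogonal projection (i.e. the self-adjoint idempotent) with range
`ker (H - λ)`.  Then for every `f`,
`(1/T) ∫₀ᵀ e^{-itH} ρ e^{itH} P f dt → P ρ P f` in norm as `T → ∞`. -/
theorem ergodic_mean_tendsto_eigenprojection
    (H ρ P : 𝓗 →L[ℂ] 𝓗) (hH : IsSelfAdjoint H) (lam : ℝ)
    (hP₁ : IsIdempotentElem P) (hP₂ : IsSelfAdjoint P)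
    (hP₃ : LinearMap.range (P : 𝓗 →ₗ[ℂ] 𝓗) = LinearMap.ker ((H - (lam : ℂ) • (1 : 𝓗 →L[ℂ] 𝓗) : 𝓗 →L[ℂ] 𝓗) : 𝓗 →ₗ[ℂ] 𝓗))
    (f : 𝓗) :
    Tendsto (fun T : ℝ => (1 / T) •
        ∫ t in (0 : ℝ)..T,
          (NormedSpace.exp ((-(Complex.I * (t : ℂ))) • H))
            (ρ ((NormedSpace.exp ((Complex.I * (t : ℂ)) • H)) (P f))))
      atTop (nhds (P (ρ (P f)))) := by
  set A : 𝓗 →L[ℂ] 𝓗 := (lam : ℂ) • 1 - H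
  have hA : IsSelfAdjoint A := by
    simp [A, IsSelfAdjoint, star_sub, hH.star_eq]
  have hker : A.ker = P.range := by
    rw [hP₃, ← LinearMap.ker_neg]
    simp [A]
  have hP : P = A.ker.starProjection := by
    obtain ⟨_, hP⟩ := isStarProjection_iff_eq_starProjection_range.mp ⟨hP₁, hP₂⟩
    simpa only [hker] using hP
  have hPf : H (P f) = (lam : ℂ) • P f := by
    have hmem : P f ∈ (H - (lam : ℂ) • 1).ker := hP₃ ▸ LinearMap.mem_range_self _ f
    simpa [sub_eq_zero] using hmem
  have hconj : ∀ t : ℝ, exp ((-(I * t)) • H) (ρ (exp ((I * t) • H) (P f)))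
      = exp ((I * t) • A) (ρ (P f)) := fun t =>
    exp_neg_smul_conj_apply_of_apply_eq_smul hPf ρ _
  simp_rw [hconj, ← timeAverage_apply]
  have hlim := tendsto_timeAverage_apply hA (ρ (P f))
  rwa [← hP] at hlim
end

section
/- The map F defined by (F f)(λ) := √(2/(1 + λ²)) · f(2·arctan λ) for λ ∈ ℝ is an isometric linear bijection from L²((−π, π), ℂ) onto L²(ℝ, ℂ); in particular, for every f ∈ L²((−π, π), ℂ) one has ∫_ℝ (2/(1 + λ²)) |f(2 arctan λ)|² dλ = ∫_{−π}^{π} |f(θ)|² dθ. -/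
/-!
The map `φ x = 2 arctan x` is a diffeomorphism of `ℝ` onto `(-π, π)` with `φ' x = 2 / (1 + x²)`,
so by the change of variables formula it pushes `(2 / (1 + x²)) dx` forward to Lebesgue measure
on `(-π, π)`. Composition with `φ` is therefore an isometry from `L²(-π, π)` to
`L²(ℝ, (2 / (1 + x²)) dx)`, onto because `φ` has the measurable left inverse `θ ↦ tan (θ / 2)`;
multiplication by the nonvanishing weight `√(2 / (1 + x²))` is an isometry from that weighted
space onto `L²(ℝ)`, with inverse multiplication by the reciprocal weight.
-/

open MeasureTheory
open scoped ENNReal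

namespace MeasureTheory

variable {α 𝕜 E : Type*} [MeasurableSpace α] {μ : Measure α} [RCLike 𝕜] [NormedAddCommGroup E]
  [NormedSpace 𝕜 E] {p : ℝ≥0∞} {ρ : α → 𝕜}

theorem eLpNorm_smul_eq_eLpNorm_withDensity (hp : p ≠ ∞) (hρ : AEMeasurable ρ μ) {f : α → E}
    (hf : AEStronglyMeasurable f (μ.withDensity fun x => ‖ρ x‖ₑ ^ p.toReal)) :
    eLpNorm (ρ • f) p μ = eLpNorm f p (μ.withDensity fun x => ‖ρ x‖ₑ ^ p.toReal) := by
  rcases eq_or_ne p 0 with rfl | hp0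
  · simp
  simp only [eLpNorm_eq_lintegral_rpow_enorm_toReal hp0 hp]
  rw [lintegral_withDensity_eq_lintegral_mul₀' (hρ.enorm.pow_const _) (hf.enorm.pow_const _)]
  simp only [Pi.smul_apply', Pi.mul_apply, enorm_smul,
    ENNReal.mul_rpow_of_nonneg _ _ ENNReal.toReal_nonneg]

theorem absolutelyContinuous_withDensity_enorm_rpow (hρ : AEMeasurable ρ μ)
    (hρ0 : ∀ᵐ x ∂μ, ρ x ≠ 0) : μ ≪ μ.withDensity fun x => ‖ρ x‖ₑ ^ p.toReal := by
  refine withDensity_absolutelyContinuous' (hρ.enorm.pow_const _) ?_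
  filter_upwards [hρ0] with x hx
  exact (ENNReal.rpow_pos (enorm_pos.2 hx) enorm_ne_top).ne'

theorem MemLp.smul_of_withDensity (hp : p ≠ ∞) (hρ : AEMeasurable ρ μ) (hρ0 : ∀ᵐ x ∂μ, ρ x ≠ 0)
    {f : α → E} (hf : MemLp f p (μ.withDensity fun x => ‖ρ x‖ₑ ^ p.toReal)) :
    MemLp (ρ • f) p μ :=
  ⟨hρ.aestronglyMeasurable.smul
      (hf.1.mono_ac (absolutelyContinuous_withDensity_enorm_rpow hρ hρ0)),
    by rw [eLpNorm_smul_eq_eLpNorm_withDensity hp hρ hf.1]; exact hf.2⟩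

namespace Lp

theorem compMeasurePreserving_surjective {β : Type*} [MeasurableSpace β] {ν : Measure β}
    {φ : α → β} (hφ : MeasurePreserving φ μ ν) {ψ : β → α} (hψ : Measurable ψ)
    (hψφ : Function.LeftInverse ψ φ) :
    Function.Surjective (compMeasurePreserving φ hφ : Lp E p ν → Lp E p μ) := by
  have hψ' : MeasurePreserving ψ ν μ :=
    ⟨hψ, by rw [← hφ.map_eq, Measure.map_map hψ hφ.measurable, hψφ.comp_eq_id, Measure.map_id]⟩
  intro f
  refine ⟨compMeasurePreserving ψ hψ' f, Lp.ext ?_⟩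
  filter_upwards [coeFn_compMeasurePreserving (compMeasurePreserving ψ hψ' f) hφ,
    hφ.quasiMeasurePreserving.ae_eq_comp (coeFn_compMeasurePreserving f hψ')] with x h1 h2
  rw [h1, h2, Function.comp_apply, Function.comp_apply, hψφ x]

variable [Fact (1 ≤ p)]

noncomputable def smulWeightₗᵢ (hp : p ≠ ∞) (hρ : AEMeasurable ρ μ) (hρ0 : ∀ᵐ x ∂μ, ρ x ≠ 0) :
    Lp E p (μ.withDensity fun x => ‖ρ x‖ₑ ^ p.toReal) →ₗᵢ[𝕜] Lp E p μ where
  toFun f := ((Lp.memLp f).smul_of_withDensity hp hρ hρ0).toLp _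
  map_add' f g := by
    rw [← MemLp.toLp_add]
    refine MemLp.toLp_congr _ _ ?_
    filter_upwards [(absolutelyContinuous_withDensity_enorm_rpow hρ hρ0).ae_le
      (Lp.coeFn_add f g)] with x hx
    simp only [Pi.smul_apply', Pi.add_apply, hx, smul_add]
  map_smul' c f := by
    rw [RingHom.id_apply, ← MemLp.toLp_const_smul]
    refine MemLp.toLp_congr _ _ ?_
    filter_upwards [(absolutelyContinuous_withDensity_enorm_rpow hρ hρ0).ae_le
      (Lp.coeFn_smul c f)] with x hx
    simp only [Pi.smul_apply', hx, smul_comm c]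
  norm_map' f := by
    rw [LinearMap.coe_mk, AddHom.coe_mk, Lp.norm_toLp,
      eLpNorm_smul_eq_eLpNorm_withDensity hp hρ (Lp.aestronglyMeasurable f), Lp.norm_def]

theorem coeFn_smulWeightₗᵢ (hp : p ≠ ∞) (hρ : AEMeasurable ρ μ) (hρ0 : ∀ᵐ x ∂μ, ρ x ≠ 0)
    (f : Lp E p (μ.withDensity fun x => ‖ρ x‖ₑ ^ p.toReal)) :
    smulWeightₗᵢ hp hρ hρ0 f =ᵐ[μ] ρ • ⇑f :=
  ((Lp.memLp f).smul_of_withDensity hp hρ hρ0).coeFn_toLp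

theorem smulWeightₗᵢ_surjective (hp : p ≠ ∞) (hρ : AEMeasurable ρ μ) (hρ0 : ∀ᵐ x ∂μ, ρ x ≠ 0) :
    Function.Surjective (smulWeightₗᵢ (E := E) hp hρ hρ0) := by
  intro g
  have hρg : ρ • ρ⁻¹ • ⇑g =ᵐ[μ] g := by
    filter_upwards [hρ0] with x hx
    simp [smul_inv_smul₀ hx]
  have hmeas : AEStronglyMeasurable (ρ⁻¹ • ⇑g) (μ.withDensity fun x => ‖ρ x‖ₑ ^ p.toReal) :=
    (hρ.inv.aestronglyMeasurable.smul (Lp.aestronglyMeasurable g)).mono_ac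
      (withDensity_absolutelyContinuous _ _)
  have hmem : MemLp (ρ⁻¹ • ⇑g) p (μ.withDensity fun x => ‖ρ x‖ₑ ^ p.toReal) := by
    refine ⟨hmeas, ?_⟩
    rw [← eLpNorm_smul_eq_eLpNorm_withDensity hp hρ hmeas, eLpNorm_congr_ae hρg]
    exact Lp.eLpNorm_lt_top g
  refine ⟨hmem.toLp _, Lp.ext ?_⟩
  filter_upwards [coeFn_smulWeightₗᵢ hp hρ hρ0 (hmem.toLp _),
    (absolutelyContinuous_withDensity_enorm_rpow hρ hρ0).ae_le hmem.coeFn_toLp, hρg] with x h1 h2 h3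
  rw [h1, Pi.smul_apply', h2, ← h3]
  rfl

end Lp

theorem exists_linearIsometryEquiv_smul_comp {β : Type*} [MeasurableSpace β] {ν : Measure β}
    [Fact (1 ≤ p)] (hp : p ≠ ∞) (hρ : AEMeasurable ρ μ) (hρ0 : ∀ᵐ x ∂μ, ρ x ≠ 0) {φ : α → β}
    (hφ : MeasurePreserving φ (μ.withDensity fun x => ‖ρ x‖ₑ ^ p.toReal) ν) {ψ : β → α}
    (hψ : Measurable ψ) (hψφ : Function.LeftInverse ψ φ) :
    ∃ F : Lp E p ν ≃ₗᵢ[𝕜] Lp E p μ, ∀ f, F f =ᵐ[μ] fun x => ρ x • f (φ x) := by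
  let T : Lp E p ν →ₗᵢ[𝕜] Lp E p μ :=
    (Lp.smulWeightₗᵢ hp hρ hρ0).comp (Lp.compMeasurePreservingₗᵢ 𝕜 φ hφ)
  have hT : Function.Surjective T := (Lp.smulWeightₗᵢ_surjective hp hρ hρ0).comp
    (Lp.compMeasurePreserving_surjective hφ hψ hψφ)
  refine ⟨LinearIsometryEquiv.ofSurjective T hT, fun f => ?_⟩
  filter_upwards [Lp.coeFn_smulWeightₗᵢ hp hρ hρ0 (Lp.compMeasurePreservingₗᵢ 𝕜 φ hφ f),
    (absolutelyContinuous_withDensity_enorm_rpow hρ hρ0).ae_le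
      (Lp.coeFn_compMeasurePreserving f hφ)] with x h1 h2
  refine h1.trans ?_
  rw [Pi.smul_apply']
  exact congrArg (ρ x • ·) h2

end MeasureTheory

theorem map_withDensity_abs_deriv_eq_restrict_range {f f' : ℝ → ℝ}
    (hf' : ∀ x, HasDerivAt f (f' x) x) (hf : Function.Injective f) :
    (volume.withDensity fun x => ENNReal.ofReal |f' x|).map f = volume.restrict (Set.range f) := by
  have h := map_withDensity_abs_det_fderiv_eq_addHaar volume
    MeasurableSet.univ.nullMeasurableSet (f' := fun x => (1 : ℝ →L[ℝ] ℝ).smulRight (f' x))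
    (fun x _ => (hf' x).hasDerivWithinAt.hasFDerivWithinAt) hf.injOn
  simpa only [Measure.restrict_univ, Set.image_univ, ContinuousLinearMap.det_smulRight,
    one_apply_eq_self, one_mul] using h

namespace Real

open Set

theorem measurable_tan : Measurable tan := by
  rw [show tan = fun x => sin x / cos x from funext tan_eq_sin_div_cos]
  fun_prop

theorem hasDerivAt_two_mul_arctan (x : ℝ) :
    HasDerivAt (fun x => 2 * arctan x) (2 / (1 + x ^ 2)) x := by
  simpa only [mul_one_div] using (hasDerivAt_arctan x).const_mul (2 : ℝ)

theorem leftInverse_tan_half_two_mul_arctan :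
    Function.LeftInverse (fun θ => tan (θ / 2)) fun x => 2 * arctan x := fun x => by
  dsimp only
  rw [mul_div_cancel_left₀ _ two_ne_zero, tan_arctan]

theorem range_two_mul_arctan : range (fun x => 2 * arctan x) = Ioo (-π) π := by
  ext θ
  constructor
  · rintro ⟨x, rfl⟩
    constructor <;> linarith [neg_pi_div_two_lt_arctan x, arctan_lt_pi_div_two x]
  · rintro ⟨h₁, h₂⟩
    refine ⟨tan (θ / 2), ?_⟩
    dsimp only
    rw [arctan_tan (by linarith) (by linarith)]
    ring

theorem integral_comp_two_mul_arctan {E : Type*} [NormedAddCommGroup E] [NormedSpace ℝ E]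
    (g : ℝ → E) : ∫ x, (2 / (1 + x ^ 2)) • g (2 * arctan x) = ∫ θ in Ioo (-π) π, g θ := by
  have h := integral_image_eq_integral_abs_deriv_smul MeasurableSet.univ
    (fun x _ => (hasDerivAt_two_mul_arctan x).hasDerivWithinAt)
    leftInverse_tan_half_two_mul_arctan.injective.injOn g
  rw [image_univ, range_two_mul_arctan, setIntegral_univ] at h
  simp_rw [h, abs_of_pos (by positivity : (0 : ℝ) < 2 / (1 + _ ^ 2))]

theorem measurePreserving_two_mul_arctan :
    MeasurePreserving (fun x => 2 * arctan x)
      (volume.withDensity fun x => ‖((√(2 / (1 + x ^ 2)) : ℝ) : ℂ)‖ₑ ^ (2 : ℝ≥0∞).toReal)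
      (volume.restrict (Ioo (-π) π)) := by
  refine ⟨by fun_prop, ?_⟩
  have hdensity (x : ℝ) : ‖((√(2 / (1 + x ^ 2)) : ℝ) : ℂ)‖ₑ ^ (2 : ℝ≥0∞).toReal =
      ENNReal.ofReal |2 / (1 + x ^ 2)| := by
    have hx : (0 : ℝ) ≤ 2 / (1 + x ^ 2) := by positivity
    rw [← ofReal_norm, Complex.norm_real, norm_of_nonneg (sqrt_nonneg _), ENNReal.toReal_ofNat,
      ENNReal.rpow_two, ← ENNReal.ofReal_pow (sqrt_nonneg _), sq_sqrt hx, abs_of_nonneg hx]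
  simp_rw [hdensity, ← range_two_mul_arctan]
  exact map_withDensity_abs_deriv_eq_restrict_range hasDerivAt_two_mul_arctan
    leftInverse_tan_half_two_mul_arctan.injective

end Real

/-- the isometry `F` of Appendix C.  The map
`(F f)(λ) := √(2/(1 + λ²)) · f(2 arctan λ)` is an isometric linear bijection from
`L²((-π, π), ℂ)` onto `L²(ℝ, ℂ)`; in particular, for every `f ∈ L²((-π, π), ℂ)`,
`∫_ℝ (2/(1 + λ²)) |f(2 arctan λ)|² dλ = ∫_{-π}^{π} |f(θ)|² dθ`. -/
theorem cayley_substitution_isometry :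
    ∃ F : Lp ℂ 2 (volume.restrict (Set.Ioo (-Real.pi) Real.pi)) ≃ₗᵢ[ℂ]
        Lp ℂ 2 (volume : MeasureTheory.Measure ℝ),
      (∀ f : Lp ℂ 2 (volume.restrict (Set.Ioo (-Real.pi) Real.pi)),
        (F f : ℝ → ℂ) =ᵐ[volume]
          fun l : ℝ => ((Real.sqrt (2 / (1 + l ^ 2)) : ℝ) : ℂ) *
            (f : ℝ → ℂ) (2 * Real.arctan l)) ∧
      ∀ f : Lp ℂ 2 (volume.restrict (Set.Ioo (-Real.pi) Real.pi)),
        ∫ l : ℝ, (2 / (1 + l ^ 2)) * ‖(f : ℝ → ℂ) (2 * Real.arctan l)‖ ^ 2 =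
          ∫ θ in Set.Ioo (-Real.pi) Real.pi, ‖(f : ℝ → ℂ) θ‖ ^ 2 := by
  have hρ0 : ∀ᵐ l : ℝ, ((Real.sqrt (2 / (1 + l ^ 2)) : ℝ) : ℂ) ≠ 0 := ae_of_all _ fun l =>
    Complex.ofReal_ne_zero.2 (Real.sqrt_pos.2 (by positivity)).ne'
  obtain ⟨F, hF⟩ := exists_linearIsometryEquiv_smul_comp (E := ℂ) ENNReal.ofNat_ne_top
    (by fun_prop) hρ0 Real.measurePreserving_two_mul_arctan
    (Real.measurable_tan.comp (measurable_id.div_const 2))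
    Real.leftInverse_tan_half_two_mul_arctan
  exact ⟨F, hF, fun f => Real.integral_comp_two_mul_arctan fun θ => ‖f θ‖ ^ 2⟩
end

section
/- For every m > 0, all b₁, b₂ ∈ ℝ and every r ∈ ℂ one has 2·|r|² ≤ |(b₁ − i·m)·(b₂ − i/m) − |r|²|². Equivalently, the cross-section σ := 4|r|²/|(b₁ − i m)(b₂ − i/m) − |r|²|² satisfies σ ≤ 2. -/
/-!
Write `p = b₁ b₂`. The real and imaginary parts of `z = (b₁ - i m)(b₂ - i/m) - |r|²` are
`p - 1 - |r|²` and `-(b₁/m + b₂ m)`, and `(b₁/m + b₂ m)² ≥ 4p`, so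
`|z|² ≥ (p - 1 - |r|²)² + 4p = (p + 1 - |r|²)² + 4|r|² ≥ 4|r|²`.
Hence even `σ ≤ 1`.
-/

open Complex

lemma four_mul_le_sq_add_sq (b₁ b₂ m n s : ℝ) :
    4 * (m * n * s) ≤ (b₁ * b₂ - m * n - s) ^ 2 + (b₁ * n + b₂ * m) ^ 2 := by
  have h : (b₁ * b₂ - m * n - s) ^ 2 + (b₁ * n + b₂ * m) ^ 2 =
      4 * (m * n * s) + ((b₁ * n - b₂ * m) ^ 2 + (b₁ * b₂ + m * n - s) ^ 2) := by ring
  rw [h]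
  exact le_add_of_nonneg_right (by positivity)

lemma sq_norm_mul_sub_ofReal (b₁ b₂ m n s : ℝ) :
    ‖((b₁ : ℂ) - I * m) * ((b₂ : ℂ) - I * n) - (s : ℂ)‖ ^ 2 =
      (b₁ * b₂ - m * n - s) ^ 2 + (b₁ * n + b₂ * m) ^ 2 := by
  rw [Complex.sq_norm, Complex.normSq_apply]
  simp only [sub_re, sub_im, mul_re, mul_im, ofReal_re, ofReal_im, I_re, I_im]
  ring

/-- The norm is `|det(B - M)|` for `M = diag(i m, i n)` and a Hermitian `B` whose off-diagonal
entries have modulus `√s`. -/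
lemma four_mul_le_sq_norm_det (b₁ b₂ m n s : ℝ) :
    4 * (m * n * s) ≤ ‖((b₁ : ℂ) - I * m) * ((b₂ : ℂ) - I * n) - (s : ℂ)‖ ^ 2 :=
  sq_norm_mul_sub_ofReal b₁ b₂ m n s ▸ four_mul_le_sq_add_sq b₁ b₂ m n s

/-- the bound `σ(λ) ≤ 2` on the cross-section, Section 4.2.
For every `m > 0`, all `b₁, b₂ ∈ ℝ` and every `r ∈ ℂ` one has
`2|r|² ≤ |(b₁ - i m)(b₂ - i/m) - |r|²|²`; equivalently the cross-section
`σ = 4|r|²/|(b₁ - i m)(b₂ - i/m) - |r|²|²` satisfies `σ ≤ 2`. -/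
theorem crossSection_le_two
    (m : ℝ) (hm : 0 < m) (b₁ b₂ : ℝ) (r : ℂ) :
    2 * ‖r‖ ^ 2 ≤
        ‖(((b₁ : ℂ) - Complex.I * (m : ℂ)) * ((b₂ : ℂ) - Complex.I / (m : ℂ)) -
          ((‖r‖ : ℝ) : ℂ) ^ 2)‖ ^ 2 ∧
      4 * ‖r‖ ^ 2 /
          ‖(((b₁ : ℂ) - Complex.I * (m : ℂ)) * ((b₂ : ℂ) - Complex.I / (m : ℂ)) -
            ((‖r‖ : ℝ) : ℂ) ^ 2)‖ ^ 2 ≤ 2 := by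
  have hdet : 4 * ‖r‖ ^ 2 ≤
      ‖(((b₁ : ℂ) - Complex.I * (m : ℂ)) * ((b₂ : ℂ) - Complex.I / (m : ℂ)) -
        ((‖r‖ : ℝ) : ℂ) ^ 2)‖ ^ 2 := by
    have h := four_mul_le_sq_norm_det b₁ b₂ m m⁻¹ (‖r‖ ^ 2)
    rwa [mul_inv_cancel₀ hm.ne', one_mul, ofReal_inv, ← div_eq_mul_inv, ofReal_pow] at h
  refine ⟨le_trans (by linarith [sq_nonneg ‖r‖]) hdet, ?_⟩
  exact (div_le_one_of_le₀ hdet (sq_nonneg _)).trans one_le_two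
end

section
/- Let H be a bounded self-adjoint operator on a complex Hilbert space 𝓗, let Q be a bounded operator on 𝓗, let λ ∈ ℝ, and let P be the orthogonal projection onto the eigenspace ker(H − λ·I). Then P · (H − i)⁻¹ [H, Q] (H + i)⁻¹ · P = 0. -/
/-!
The resolvents `(H ∓ i)⁻¹` commute with `H`, so `(H - i)⁻¹ [H, Q] (H + i)⁻¹ = [H, X]` with
`X = (H - i)⁻¹ Q (H + i)⁻¹`. Since `H` is self-adjoint, `H P = λ P` gives `P H = λ P` as well,
hence `P [H, X] P = λ P X P - λ P X P = 0`.
-/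

open ContinuousLinearMap

variable {𝓗 : Type*} [NormedAddCommGroup 𝓗] [InnerProductSpace ℂ 𝓗] [CompleteSpace 𝓗]

theorem Commute.ring_inverse_left {M₀ : Type*} [MonoidWithZero M₀] {a b : M₀}
    (h : Commute a b) : Commute (Ring.inverse a) b := by
  by_cases ha : IsUnit a
  · obtain ⟨u, rfl⟩ := ha
    rw [Ring.inverse_unit]
    exact h.units_inv_left
  · rw [Ring.inverse_non_unit a ha]
    exact Commute.zero_left b

theorem mul_commutator_mul_of_commute {A : Type*} [Ring A] {a b h q : A}
    (ha : Commute a h) (hb : Commute b h) :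
    a * (h * q - q * h) * b = h * (a * q * b) - a * q * b * h :=
  calc a * (h * q - q * h) * b = a * h * q * b - a * q * (h * b) := by noncomm_ring
    _ = h * a * q * b - a * q * (b * h) := by rw [ha.eq, hb.eq]
    _ = h * (a * q * b) - a * q * b * h := by noncomm_ring

theorem mul_commutator_mul_eq_zero_of_mul_eq_smul {R A : Type*} [Ring A] [SMul R A]
    [IsScalarTower R A A] [SMulCommClass R A A] {p h : A} {c : R}
    (hhp : h * p = c • p) (hph : p * h = c • p) (x : A) :
    p * (h * x - x * h) * p = 0 :=
  calc p * (h * x - x * h) * p = p * h * x * p - p * x * (h * p) := by noncomm_ring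
    _ = 0 := by rw [hph, hhp, smul_mul_assoc, smul_mul_assoc, mul_smul_comm, sub_self]

theorem IsSelfAdjoint.mul_eq_smul_of_mul_eq_smul {R A : Type*} [CommSemiring R] [StarRing R]
    [Semiring A] [StarRing A] [Module R A] [StarModule R A] {p h : A} {c : R}
    (hp : IsSelfAdjoint p) (hh : IsSelfAdjoint h) (hc : IsSelfAdjoint c)
    (hhp : h * p = c • p) : p * h = c • p := by
  simpa only [star_mul, star_smul, hp.star_eq, hh.star_eq, hc.star_eq] using congrArg star hhp

theorem ContinuousLinearMap.mul_eq_smul_of_range_le_ker {R M : Type*} [CommRing R]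
    [TopologicalSpace M] [AddCommGroup M] [Module R M] [IsTopologicalAddGroup M]
    [ContinuousConstSMul R M] {h p : M →L[R] M} {c : R}
    (hp : LinearMap.range (p : M →ₗ[R] M) ≤
      LinearMap.ker (↑(h - c • (1 : M →L[R] M)) : M →ₗ[R] M)) :
    h * p = c • p := by
  ext x
  simpa [sub_eq_zero] using hp (LinearMap.mem_range_self _ x)

theorem eigenprojection_annihilates_commutator_general
    (H Q P : 𝓗 →L[ℂ] 𝓗) (hH : IsSelfAdjoint H) (lam : ℝ)
    (hP₂ : IsSelfAdjoint P)
    (hP₃ : LinearMap.range (P : 𝓗 →ₗ[ℂ] 𝓗) = LinearMap.ker (↑(H - (lam : ℂ) • (1 : 𝓗 →L[ℂ] 𝓗)) : 𝓗 →ₗ[ℂ] 𝓗)) :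
    P * (Ring.inverse (H - Complex.I • (1 : 𝓗 →L[ℂ] 𝓗)) * (H * Q - Q * H) *
        Ring.inverse (H + Complex.I • (1 : 𝓗 →L[ℂ] 𝓗))) * P = 0 := by
  have hHP : H * P = (lam : ℂ) • P := mul_eq_smul_of_range_le_ker hP₃.le
  have hPH : P * H = (lam : ℂ) • P :=
    hP₂.mul_eq_smul_of_mul_eq_smul hH (Complex.conj_ofReal lam) hHP
  have hI : Commute (Complex.I • (1 : 𝓗 →L[ℂ] 𝓗)) H := (Commute.one_left H).smul_left _
  rw [mul_commutator_mul_of_commute ((Commute.refl H).sub_left hI).ring_inverse_left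
    ((Commute.refl H).add_left hI).ring_inverse_left]
  exact mul_commutator_mul_eq_zero_of_mul_eq_smul hHP hPH _

/-- the claim `E_H({λ}) K E_H({λ}) = 0`, proof of Proposition 2.2.
Let `H` be a bounded self-adjoint operator, `Q` a bounded operator, `λ ∈ ℝ`, and `P` the
orthogonal projection (self-adjoint idempotent) with range `ker (H - λ)`.  Then
`P (H - i)⁻¹ [H, Q] (H + i)⁻¹ P = 0`. -/
theorem eigenprojection_annihilates_commutator
    (H Q P : 𝓗 →L[ℂ] 𝓗) (hH : IsSelfAdjoint H) (lam : ℝ)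
    (hP₁ : IsIdempotentElem P) (hP₂ : IsSelfAdjoint P)
    (hP₃ : LinearMap.range (P : 𝓗 →ₗ[ℂ] 𝓗) = LinearMap.ker (↑(H - (lam : ℂ) • (1 : 𝓗 →L[ℂ] 𝓗)) : 𝓗 →ₗ[ℂ] 𝓗)) :
    P * (Ring.inverse (H - Complex.I • (1 : 𝓗 →L[ℂ] 𝓗)) * (H * Q - Q * H) *
        Ring.inverse (H + Complex.I • (1 : 𝓗 →L[ℂ] 𝓗))) * P = 0 :=
  eigenprojection_annihilates_commutator_general H Q P hH lam hP₂ hP₃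
end
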